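/- arXiv:1502.06695 — 8 statements merged into one kernel-verified Lean document; each statement's English description precedes it below -/
import Mathlib

section
/- Let L ≥ 2, let f_0, …, f_{L−1} ∈ ℂ[[w]] with f_0(0) ≠ 0, and let 𝐦 = (m_0, …, m_{L−1}) be a tuple of positive integers. Suppose that for each i (0 ≤ i ≤ L−1) we are given a type I system (𝔮^{𝐦+𝐞_i}_j)_{0≤j≤L−1} for the multi-index 𝐦+𝐞_i and a type II system (𝔭^{𝐦−𝐞_i}_j)_{0≤j≤L−1} for the multi-index 𝐦−𝐞_i. Then the L×L matrix product [𝔮^{𝐦+𝐞_i}_j]_{0≤i,j≤L−1} · [𝔭^{𝐦−𝐞_j}_i]_{0≤i,j≤L−1} equals w^{|𝐦|}·D for some diagonal constant matrix D ∈ ℂ^{L×L}. Moreover, if each 𝔮^{𝐦+𝐞_i}_i is monic of degree m_i and each 𝔭^{𝐦−𝐞_i}_i is monic of degree |𝐦|−m_i, then D is the identity matrix. -/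
noncomputable section

/-- `g = O(w^N)`: the coefficients of `w^0, …, w^{N-1}` in `g` vanish. -/
def bigOh (g : PowerSeries ℂ) (N : ℕ) : Prop := ∀ k < N, PowerSeries.coeff k g = 0

/-- A type I (Hermite–Padé) system for `f` with multi-index `k`:
polynomials `q i` of degree ≤ `k i - 1` with `∑ f i * q i = O(w^{|k|-1})`. -/
def IsTypeI {L : ℕ} (f : Fin L → PowerSeries ℂ) (k : Fin L → ℕ)
    (q : Fin L → Polynomial ℂ) : Prop :=
  (∀ j, (q j).degree < (k j : ℕ)) ∧
  bigOh (∑ j, f j * ((q j : Polynomial ℂ) : PowerSeries ℂ)) ((∑ j, k j) - 1)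

/-- A type II (simultaneous Padé) system for `f` with multi-index `k`:
polynomials `p i` of degree ≤ `|k| - k i` with `f i * p j - f j * p i = O(w^{|k|+1})`. -/
def IsTypeII {L : ℕ} (f : Fin L → PowerSeries ℂ) (k : Fin L → ℕ)
    (p : Fin L → Polynomial ℂ) : Prop :=
  (∀ j, (p j).degree ≤ (((∑ t, k t) - k j : ℕ) : WithBot ℕ)) ∧
  ∀ i j, bigOh (f i * ((p j : Polynomial ℂ) : PowerSeries ℂ)
                 - f j * ((p i : Polynomial ℂ) : PowerSeries ℂ)) ((∑ t, k t) + 1)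

/-!
Let `M = |m|`. For a type I system `q` for `m + eᵢ` and a type II system `p` for `m - eⱼ`, the
identity `f₀ · ∑ₜ qₜ pₜ = p₀ · ∑ₜ fₜ qₜ + ∑ₜ qₜ (f₀ pₜ - fₜ p₀)`
shows `∑ₜ qₜ pₜ = O(w^M)`: both defects on the right are `O(w^M)`, since
`|m + eᵢ| - 1 = M = |m - eⱼ| + 1`, and `f₀` is a unit. The degree bounds of the two systems give
`deg (qₜ pₜ) ≤ M - 2 + [t = i] + [t = j]`, so the `(i, j)` entry `∑ₜ qₜ pₜ` of the product has
degree at most `M`, and less than `M` when `i ≠ j`. Hence it is a constant multiple of `w^M`, zero off the diagonal; on the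
diagonal only the term `t = i` reaches degree `M`, which settles the monic case.
-/

open Polynomial

theorem dvd_sum_mul_of_isUnit {R ι : Type*} [CommRing R] (s : Finset ι) {a b c : ι → R}
    {d : R} {z : ι} (hz : IsUnit (a z)) (hab : d ∣ ∑ t ∈ s, a t * b t)
    (hac : ∀ t ∈ s, d ∣ a z * c t - a t * c z) : d ∣ ∑ t ∈ s, b t * c t := by
  have key : a z * ∑ t ∈ s, b t * c t =
      c z * ∑ t ∈ s, a t * b t + ∑ t ∈ s, b t * (a z * c t - a t * c z) := by
    simp only [Finset.mul_sum, ← Finset.sum_add_distrib]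
    exact Finset.sum_congr rfl fun t _ => by ring
  rw [← hz.dvd_mul_left, key]
  exact dvd_add (hab.mul_left _) (Finset.dvd_sum fun t ht => (hac t ht).mul_left _)

namespace Polynomial

variable {R : Type*} [Semiring R]

theorem X_pow_dvd_coe_iff {p : R[X]} {n : ℕ} :
    PowerSeries.X ^ n ∣ (p : PowerSeries R) ↔ X ^ n ∣ p := by
  simp only [PowerSeries.X_pow_dvd_iff, Polynomial.X_pow_dvd_iff, coeff_coe]

theorem eq_C_coeff_mul_X_pow_of_X_pow_dvd {p : R[X]} {n : ℕ} (hdvd : X ^ n ∣ p)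
    (hdeg : p.natDegree ≤ n) : p = C (p.coeff n) * X ^ n := by
  ext k
  rw [coeff_C_mul_X_pow]
  rcases lt_trichotomy k n with hk | rfl | hk
  · rw [Polynomial.X_pow_dvd_iff.1 hdvd k hk, if_neg hk.ne]
  · rw [if_pos rfl]
  · rw [coeff_eq_zero_of_natDegree_lt (hdeg.trans_lt hk), if_neg hk.ne']

end Polynomial

section MultiIndex

variable {ι : Type*} [Fintype ι] [DecidableEq ι]

theorem sum_add_ite_eq (m : ι → ℕ) (i : ι) :
    ∑ j, (m j + if j = i then 1 else 0) = ∑ j, m j + 1 := by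
  rw [Finset.sum_add_distrib, Finset.sum_ite_eq']
  simp

theorem sum_tsub_ite_eq {m : ι → ℕ} {i : ι} (hi : 0 < m i) :
    ∑ j, (m j - if j = i then 1 else 0) = ∑ j, m j - 1 := by
  have hcancel : ∀ j, (m j - if j = i then 1 else 0) + (if j = i then 1 else 0) = m j := by
    intro j
    split_ifs with hj
    · subst hj; omega
    · rfl
  have h := sum_add_ite_eq (fun j => m j - if j = i then 1 else 0) i
  simp only [hcancel] at h
  omega

end MultiIndex

theorem bigOh_iff_X_pow_dvd {g : PowerSeries ℂ} {N : ℕ} : bigOh g N ↔ PowerSeries.X ^ N ∣ g :=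
  PowerSeries.X_pow_dvd_iff.symm

section Systems

variable {L : ℕ} {f : Fin L → PowerSeries ℂ}

namespace IsTypeI

variable {k : Fin L → ℕ} {q : Fin L → ℂ[X]}

theorem natDegree_le (h : IsTypeI f k q) (j : Fin L) : (q j).natDegree ≤ k j - 1 := by
  rcases eq_or_ne (q j) 0 with hj | hj
  · simp [hj]
  · have := (natDegree_lt_iff_degree_lt hj).2 (h.1 j)
    omega

theorem X_pow_dvd (h : IsTypeI f k q) :
    PowerSeries.X ^ (∑ j, k j - 1) ∣ ∑ j, f j * (q j : PowerSeries ℂ) :=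
  bigOh_iff_X_pow_dvd.1 h.2

end IsTypeI

namespace IsTypeII

variable {k : Fin L → ℕ} {p : Fin L → ℂ[X]}

theorem natDegree_le (h : IsTypeII f k p) (j : Fin L) : (p j).natDegree ≤ ∑ t, k t - k j :=
  natDegree_le_iff_degree_le.2 (h.1 j)

theorem X_pow_dvd (h : IsTypeII f k p) (i j : Fin L) :
    PowerSeries.X ^ (∑ t, k t + 1) ∣ f i * (p j : PowerSeries ℂ) - f j * (p i : PowerSeries ℂ) :=
  bigOh_iff_X_pow_dvd.1 (h.2 i j)

end IsTypeII

theorem IsTypeI.X_pow_dvd_sum_mul {k k' : Fin L → ℕ} {q p : Fin L → ℂ[X]}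
    (hq : IsTypeI f k q) (hp : IsTypeII f k' p) {z : Fin L} (hz : IsUnit (f z)) {N : ℕ}
    (hNk : N ≤ ∑ t, k t - 1) (hNk' : N ≤ ∑ t, k' t + 1) : X ^ N ∣ ∑ t, q t * p t := by
  rw [← X_pow_dvd_coe_iff, ← coeToPowerSeries.ringHom_apply, map_sum]
  simp only [map_mul, coeToPowerSeries.ringHom_apply]
  exact dvd_sum_mul_of_isUnit _ hz ((pow_dvd_pow _ hNk).trans hq.X_pow_dvd)
    fun t _ => (pow_dvd_pow _ hNk').trans (hp.X_pow_dvd z t)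

namespace IsTypeI

variable {m : Fin L → ℕ} {q p : Fin L → ℂ[X]} {i j : Fin L}

-- The `2` is moved to the left to avoid truncated subtraction.
theorem natDegree_mul_add_two_le (hq : IsTypeI f (fun s => m s + if s = i then 1 else 0) q)
    (hm : ∀ t, 0 < m t) (hlt : ∀ t, m t < ∑ s, m s)
    (hp : IsTypeII f (fun s => m s - if s = j then 1 else 0) p) (t : Fin L) :
    (q t * p t).natDegree + 2 ≤
      ∑ s, m s + (if t = i then 1 else 0) + (if t = j then 1 else 0) := by
  have hqt := hq.natDegree_le t
  have hpt := hp.natDegree_le t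
  rw [sum_tsub_ite_eq (hm j)] at hpt
  have := natDegree_mul_le (p := q t) (q := p t)
  have := hm t
  have := hlt t
  split_ifs at hqt hpt ⊢ <;> omega

theorem natDegree_sum_mul_le (hq : IsTypeI f (fun s => m s + if s = i then 1 else 0) q)
    (hm : ∀ t, 0 < m t) (hlt : ∀ t, m t < ∑ s, m s)
    (hp : IsTypeII f (fun s => m s - if s = j then 1 else 0) p) :
    (∑ t, q t * p t).natDegree ≤ ∑ s, m s - if i = j then 0 else 1 := by
  refine natDegree_sum_le_of_forall_le _ _ fun t _ => ?_
  have := hq.natDegree_mul_add_two_le hm hlt hp t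
  split_ifs at this ⊢ <;> omega

theorem coeff_sum_mul_of_monic (hq : IsTypeI f (fun s => m s + if s = i then 1 else 0) q)
    (hm : ∀ t, 0 < m t) (hlt : ∀ t, m t < ∑ s, m s)
    (hp : IsTypeII f (fun s => m s - if s = i then 1 else 0) p)
    (hqi : (q i).Monic ∧ (q i).natDegree = m i)
    (hpi : (p i).Monic ∧ (p i).natDegree = ∑ s, m s - m i) :
    (∑ t, q t * p t).coeff (∑ s, m s) = 1 := by
  rw [finsetSum_coeff, Finset.sum_eq_single_of_mem i (Finset.mem_univ i)]
  · have hdeg : (q i * p i).natDegree = ∑ s, m s := by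
      rw [hqi.1.natDegree_mul hpi.1, hqi.2, hpi.2]
      have := hlt i
      omega
    rw [← hdeg]
    exact (hqi.1.mul hpi.1).coeff_natDegree
  · intro t _ ht
    have := hq.natDegree_mul_add_two_le hm hlt hp t
    rw [if_neg ht] at this
    exact coeff_eq_zero_of_natDegree_lt (by omega)

end IsTypeI

end Systems

/-- Mahler's duality for Hermite's two approximation problems. -/
theorem mahler_duality (L : ℕ) (hL : 2 ≤ L)
    (f : Fin L → PowerSeries ℂ)
    (hf0 : PowerSeries.constantCoeff (f ⟨0, by omega⟩) ≠ 0)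
    (m : Fin L → ℕ) (hm : ∀ i, 0 < m i)
    (q p : Fin L → Fin L → Polynomial ℂ)
    (hq : ∀ i, IsTypeI f (fun j => m j + if j = i then 1 else 0) (q i))
    (hp : ∀ i, IsTypeII f (fun j => m j - if j = i then 1 else 0) (p i)) :
    (∃ D : Fin L → ℂ,
        (Matrix.of fun i j => q i j) * (Matrix.of fun i j => p j i) =
          Matrix.diagonal fun i => Polynomial.C (D i) * Polynomial.X ^ (∑ t, m t)) ∧
      ((∀ i, (q i i).Monic ∧ (q i i).natDegree = m i) →
        (∀ i, (p i i).Monic ∧ (p i i).natDegree = (∑ t, m t) - m i) →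
        (Matrix.of fun i j => q i j) * (Matrix.of fun i j => p j i) =
          Matrix.diagonal fun _ => Polynomial.X ^ (∑ t, m t)) := by
  have : Nontrivial (Fin L) := Fin.nontrivial_iff_two_le.mpr hL
  have hlt : ∀ t, m t < ∑ s, m s := fun t =>
    let ⟨s, hs⟩ := exists_ne t
    Finset.single_lt_sum hs (Finset.mem_univ _) (Finset.mem_univ _) (hm s)
      fun _ _ _ => Nat.zero_le _
  have hunit : IsUnit (f ⟨0, by omega⟩) :=
    PowerSeries.isUnit_iff_constantCoeff.2 (isUnit_iff_ne_zero.2 hf0)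
  have hentry : ∀ i j,
      ∑ t, q i t * p j t = C ((∑ t, q i t * p j t).coeff (∑ s, m s)) * X ^ ∑ s, m s :=
    fun i j => eq_C_coeff_mul_X_pow_of_X_pow_dvd
      ((hq i).X_pow_dvd_sum_mul (hp j) hunit
        (by rw [sum_add_ite_eq]; omega) (by rw [sum_tsub_ite_eq (hm j)]; omega))
      (((hq i).natDegree_sum_mul_le hm hlt (hp j)).trans (Nat.sub_le _ _))
  have hprod : (Matrix.of fun i j => q i j) * (Matrix.of fun i j => p j i) =
      Matrix.diagonal fun i => C ((∑ t, q i t * p i t).coeff (∑ s, m s)) * X ^ ∑ s, m s := by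
    ext i j : 1
    simp only [Matrix.mul_apply, Matrix.of_apply]
    rcases eq_or_ne i j with rfl | hij
    · rw [Matrix.diagonal_apply_eq, ← hentry]
    · have hdeg := (hq i).natDegree_sum_mul_le hm hlt (hp j)
      rw [if_neg hij] at hdeg
      have := hlt i
      rw [Matrix.diagonal_apply_ne _ hij, hentry,
        coeff_eq_zero_of_natDegree_lt (p := ∑ t, q i t * p j t) (by omega), C_0, zero_mul]
  refine ⟨⟨_, hprod⟩, fun hqm hpm => hprod.trans ?_⟩
  simp only [(hq _).coeff_sum_mul_of_monic hm hlt (hp _) (hqm _) (hpm _), C_1, one_mul]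
end
end

section
/- Let Q_j^{(i)} be a solution of the Hermite–Padé approximation problem and P_i^{(j)} a solution of the simultaneous Padé approximation problem for the same f_0, …, f_{L−1}, so that M_Q(w)·M_P(w) = w^{nL}·D with D diagonal constant. Fix i with 0 ≤ i ≤ L−1 and suppose the ith diagonal entry D_{ii} is nonzero. Then deg Q_i^{(i)} = n exactly, deg P_i^{(i)} = n(L−1) exactly, and D_{ii} equals the product of the leading coefficients of Q_i^{(i)} and P_i^{(i)}. -/
noncomputable section

/-- The entries of the row vector Q̃^{(i)} = (Q_0^{(i)}, …, Q_i^{(i)}, wQ_{i+1}^{(i)}, …, wQ_{L-1}^{(i)}). -/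
def Qtil {L : ℕ} (Q : Fin L → Fin L → Polynomial ℂ) (i j : Fin L) : Polynomial ℂ :=
  if (j : ℕ) ≤ (i : ℕ) then Q i j else Polynomial.X * Q i j

/-- A solution of the Hermite–Padé approximation problem. -/
def IsHPSol {L : ℕ} (n : ℕ) (f : Fin L → PowerSeries ℂ)
    (Q : Fin L → Fin L → Polynomial ℂ) : Prop :=
  (∀ i j, (Q i j).degree ≤ ((n - 1 + if i = j then 1 else 0 : ℕ) : WithBot ℕ)) ∧
  ∀ i, bigOh (∑ j, f j * ((Qtil Q i j : Polynomial ℂ) : PowerSeries ℂ)) (n * L)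

/-- The entries of the column vector P̃^{(j)} = ᵀ(wP_0^{(j)}, …, wP_{j-1}^{(j)}, P_j^{(j)}, …, P_{L-1}^{(j)}). -/
def Ptil {L : ℕ} (P : Fin L → Fin L → Polynomial ℂ) (j i : Fin L) : Polynomial ℂ :=
  if (i : ℕ) < (j : ℕ) then Polynomial.X * P j i else P j i

/-- A solution of the simultaneous Padé approximation problem.
Here `P j i` denotes the polynomial `P_i^{(j)}`. -/
def IsSPSol {L : ℕ} [NeZero L] (n : ℕ) (f : Fin L → PowerSeries ℂ)
    (P : Fin L → Fin L → Polynomial ℂ) : Prop :=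
  (∀ j i, (P j i).degree ≤ ((n * (L - 1) - 1 + if i = j then 1 else 0 : ℕ) : WithBot ℕ)) ∧
  (∀ i : Fin L, 1 ≤ (i : ℕ) →
    bigOh (f 0 * ((P 0 i : Polynomial ℂ) : PowerSeries ℂ)
      - f i * ((P 0 0 : Polynomial ℂ) : PowerSeries ℂ)) (n * L)) ∧
  (∀ j i : Fin L, 1 ≤ (j : ℕ) → 1 ≤ (i : ℕ) → (i : ℕ) < (j : ℕ) →
    bigOh (f 0 * ((P j i : Polynomial ℂ) : PowerSeries ℂ)
      - f i * ((P j 0 : Polynomial ℂ) : PowerSeries ℂ)) (n * L)) ∧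
  (∀ j i : Fin L, 1 ≤ (j : ℕ) → (j : ℕ) ≤ (i : ℕ) →
    bigOh (f 0 * ((P j i : Polynomial ℂ) : PowerSeries ℂ)
      - f i * ((Polynomial.X * P j 0 : Polynomial ℂ) : PowerSeries ℂ)) (n * L))

/-!
Compare the coefficients of `w^{nL}` in the `i`th diagonal entry of `M_Q M_P = w^{nL} D`. The
shifts by `w` in `Q̃` and `P̃` sit on opposite sides of the diagonal, so by the degree bounds every
term `Q̃_c P̃_c` with `c ≠ i` has degree `< nL`. What remains is the product `Q_i^{(i)} P_i^{(i)}`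
of polynomials of degree at most `n` and `n(L-1)`, whose `w^{nL}`-coefficient is the product of
their coefficients in these top degrees; `D_{ii} ≠ 0` forces both to be nonzero.
-/

namespace Polynomial

theorem natDegree_eq_of_coeff_mul_add_ne_zero {R : Type*} [Semiring R] {p q : R[X]} {a b : ℕ}
    (hp : p.natDegree ≤ a) (hq : q.natDegree ≤ b) (h : (p * q).coeff (a + b) ≠ 0) :
    p.natDegree = a ∧ q.natDegree = b ∧ (p * q).coeff (a + b) = p.leadingCoeff * q.leadingCoeff := by
  rw [coeff_mul_add_eq_of_natDegree_le hp hq] at h ⊢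
  have hpa : p.natDegree = a := le_antisymm hp (le_natDegree_of_ne_zero (left_ne_zero_of_mul h))
  have hqb : q.natDegree = b := le_antisymm hq (le_natDegree_of_ne_zero (right_ne_zero_of_mul h))
  exact ⟨hpa, hqb, by rw [leadingCoeff, leadingCoeff, hpa, hqb]⟩

end Polynomial

open Polynomial

section DegreeBounds

variable {L n : ℕ} {f : Fin L → PowerSeries ℂ} {Q P : Fin L → Fin L → ℂ[X]}

theorem IsHPSol.natDegree_le_of_ne (hQ : IsHPSol n f Q) {i j : Fin L} (hij : i ≠ j) :
    (Q i j).natDegree ≤ n - 1 :=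
  natDegree_le_iff_degree_le.mpr (by simpa [hij] using hQ.1 i j)

theorem IsHPSol.natDegree_diag_le (hQ : IsHPSol n f Q) (hn : 0 < n) (i : Fin L) :
    (Q i i).natDegree ≤ n :=
  natDegree_le_iff_degree_le.mpr (by simpa [Nat.sub_add_cancel hn] using hQ.1 i i)

variable [NeZero L]

theorem IsSPSol.natDegree_le_of_ne (hP : IsSPSol n f P) {j i : Fin L} (hji : i ≠ j) :
    (P j i).natDegree ≤ n * (L - 1) - 1 :=
  natDegree_le_iff_degree_le.mpr (by simpa [hji] using hP.1 j i)

theorem IsSPSol.natDegree_diag_le (hP : IsSPSol n f P) (hn : 0 < n) (hL : 2 ≤ L) (i : Fin L) :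
    (P i i).natDegree ≤ n * (L - 1) := by
  have hpos : 0 < n * (L - 1) := Nat.mul_pos hn (by omega)
  have h : (P i i).natDegree ≤ n * (L - 1) - 1 + 1 :=
    natDegree_le_iff_degree_le.mpr (by simpa only [if_true, eq_self_iff_true] using hP.1 i i)
  omega

theorem natDegree_Qtil_mul_Ptil_lt (hn : 0 < n) (hQ : IsHPSol n f Q) (hP : IsSPSol n f P)
    {i c : Fin L} (hc : c ≠ i) : (Qtil Q i c * Ptil P i c).natDegree < n * L := by
  have hci := Fin.val_ne_of_ne hc
  have hnL : n ≤ n * (L - 1) := Nat.le_mul_of_pos_right n (by omega)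
  have hsplit : n * (L - 1) = n * L - n := Nat.mul_sub_one n L
  have hQc := hQ.natDegree_le_of_ne hc.symm
  have hPc := hP.natDegree_le_of_ne hc
  rcases lt_or_gt_of_ne hci with hlt | hgt
  · rw [Qtil, if_pos hlt.le, Ptil, if_pos hlt]
    have := natDegree_mul_le_of_le hQc (natDegree_mul_le_of_le natDegree_X_le hPc)
    omega
  · rw [Qtil, if_neg (by omega), Ptil, if_neg (by omega)]
    have := natDegree_mul_le_of_le (natDegree_mul_le_of_le natDegree_X_le hQc) hPc
    omega

theorem coeff_mul_diag_eq_of_mul_eq_diagonal (hn : 0 < n) (hQ : IsHPSol n f Q) (hP : IsSPSol n f P)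
    {D : Fin L → ℂ}
    (hD : (Matrix.of fun i j => Qtil Q i j) * (Matrix.of fun i j => Ptil P j i) =
      Matrix.diagonal fun i => C (D i) * X ^ (n * L))
    (i : Fin L) : (Q i i * P i i).coeff (n * L) = D i := by
  have h := congrArg (fun M => (M i i).coeff (n * L)) hD
  simp only [Matrix.mul_apply, Matrix.of_apply, Matrix.diagonal_apply_eq, finsetSum_coeff,
    coeff_C_mul_X_pow, if_true] at h
  rwa [Finset.sum_eq_single i
    (fun c _ hc => coeff_eq_zero_of_natDegree_lt (natDegree_Qtil_mul_Ptil_lt hn hQ hP hc))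
    (by simp), Qtil, if_pos le_rfl, Ptil, if_neg (lt_irrefl _)] at h

end DegreeBounds

theorem diagonal_degrees_general (L n : ℕ) (hL : 2 ≤ L) [NeZero L] (hn : 0 < n)
    (f : Fin L → PowerSeries ℂ)
    (Q P : Fin L → Fin L → Polynomial ℂ)
    (hQ : IsHPSol n f Q) (hP : IsSPSol n f P)
    (D : Fin L → ℂ)
    (hD : (Matrix.of fun i j => Qtil Q i j) * (Matrix.of fun i j => Ptil P j i) =
      Matrix.diagonal fun i => Polynomial.C (D i) * Polynomial.X ^ (n * L))
    (i : Fin L) (hDi : D i ≠ 0) :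
    (Q i i).natDegree = n ∧ (P i i).natDegree = n * (L - 1) ∧
      D i = (Q i i).leadingCoeff * (P i i).leadingCoeff := by
  have hentry := coeff_mul_diag_eq_of_mul_eq_diagonal hn hQ hP hD i
  have hnL : n * L = n + n * (L - 1) := by
    rw [Nat.mul_sub_one, Nat.add_sub_cancel' (Nat.le_mul_of_pos_right n (by omega))]
  rw [hnL] at hentry
  obtain ⟨hq, hp, hlead⟩ := natDegree_eq_of_coeff_mul_add_ne_zero (hQ.natDegree_diag_le hn i)
    (hP.natDegree_diag_le hn hL i) (hentry ▸ hDi)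
  exact ⟨hq, hp, hentry ▸ hlead⟩

/-- Exact degrees of the diagonal parts and the diagonal constants. -/
theorem diagonal_degrees (L n : ℕ) (hL : 2 ≤ L) [NeZero L] (hn : 0 < n)
    (f : Fin L → PowerSeries ℂ) (hf0 : PowerSeries.constantCoeff (f 0) ≠ 0)
    (Q P : Fin L → Fin L → Polynomial ℂ)
    (hQ : IsHPSol n f Q) (hP : IsSPSol n f P)
    (D : Fin L → ℂ)
    (hD : (Matrix.of fun i j => Qtil Q i j) * (Matrix.of fun i j => Ptil P j i) =
      Matrix.diagonal fun i => Polynomial.C (D i) * Polynomial.X ^ (n * L))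
    (i : Fin L) (hDi : D i ≠ 0) :
    (Q i i).natDegree = n ∧ (P i i).natDegree = n * (L - 1) ∧
      D i = (Q i i).leadingCoeff * (P i i).leadingCoeff :=
  diagonal_degrees_general L n hL hn f Q P hQ hP D hD i hDi
end
end

section
/- Let Q_j^{(i)} be a solution of the Hermite–Padé approximation problem and P_i^{(j)} a solution of the simultaneous Padé approximation problem for the same f_0, …, f_{L−1}, normalized so that each diagonal part Q_i^{(i)} is monic of degree n and each P_i^{(i)} is monic of degree n(L−1). Define the matrix R(z) := z^n·M_Q(z^{−1}). Then: (i) R(z) is a matrix of polynomials in z, and its inverse is R(z)^{−1} = z^{n(L−1)}·M_P(z^{−1}), which is also a matrix of polynomials in z; (ii) det R(z) = 1 identically, i.e. R(z) ∈ SL(L, ℂ[z]). -/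
/-!
Write `M_Q`, `M_P` for the polynomial matrices with entries `Qtil Q i j` and `Ptil P k j`, and
`g = ∑ⱼ Q̃ⱼ⁽ⁱ⁾ P̃ⱼ⁽ᵏ⁾` for an entry of `M_Q M_P`; it has degree at most `nL`. Writing
`∑ⱼ fⱼ Q̃ⱼ⁽ⁱ⁾ = w^{nL} ρ` and `f₀ P̃ⱼ⁽ᵏ⁾ - fⱼ P̃₀⁽ᵏ⁾ = w^{nL} eⱼ`, one gets
`f₀ g = w^{nL} (P̃₀⁽ᵏ⁾ ρ + ∑ⱼ Q̃ⱼ⁽ⁱ⁾ eⱼ)`, so `g = c w^{nL}` because `f₀` is a unit. Comparing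
constant terms gives `f₀(0) c = P̃₀⁽ᵏ⁾(0) ρ(0) + ∑ⱼ Q̃ⱼ⁽ⁱ⁾(0) eⱼ(0)`, which vanishes for `i < k`:
`Q̃ⱼ⁽ⁱ⁾(0) = 0` for `j > i`, while `P̃₀⁽ᵏ⁾` and the remainders `eⱼ` with `j < k` carry a factor `w`.
For `k ≤ i` the leading coefficients of `M_Q` and `M_P` are upper unitriangular, so `c = δᵢₖ`.
Hence `M_Q M_P = w^{nL}`, and reversing coefficients gives `R S = 1`. Then `det R` is a unit,
i.e. a constant, equal to its value at `0`: the determinant of the upper unitriangular matrix of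
leading coefficients of `M_Q`.
-/

noncomputable section

open Polynomial

section General

theorem exists_dotProduct_eq_mul_of_isUnit {R ι : Type*} [CommRing R] [Fintype ι]
    {f q v e : ι → R} {i₀ : ι} {t ρ : R} (hu : IsUnit (f i₀)) (hq : f ⬝ᵥ q = t * ρ)
    (hv : f i₀ • v - v i₀ • f = t • e) :
    ∃ h, q ⬝ᵥ v = t * h ∧ f i₀ * h = v i₀ * ρ + q ⬝ᵥ e := by
  have key : f i₀ * (q ⬝ᵥ v) = t * (v i₀ * ρ + q ⬝ᵥ e) := by
    rw [← smul_eq_mul, ← dotProduct_smul, ← sub_add_cancel (f i₀ • v) (v i₀ • f), hv,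
      dotProduct_add, dotProduct_smul, dotProduct_smul, dotProduct_comm q f, hq, smul_eq_mul,
      smul_eq_mul]
    ring
  obtain ⟨u, hu⟩ := hu
  rw [← hu] at key ⊢
  refine ⟨↑u⁻¹ * (v i₀ * ρ + q ⬝ᵥ e), ?_, Units.mul_inv_cancel_left u _⟩
  rw [← Units.inv_mul_cancel_left u (q ⬝ᵥ v), key]
  ring

theorem Polynomial.reflect_sum {R ι : Type*} [Semiring R] (N : ℕ) (s : Finset ι) (g : ι → R[X]) :
    reflect N (∑ i ∈ s, g i) = ∑ i ∈ s, reflect N (g i) :=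
  map_sum (⟨⟨reflect N, reflect_zero⟩, fun p q => reflect_add p q N⟩ : R[X] →+ R[X]) g s

theorem Polynomial.eq_C_mul_X_pow_of_natDegree_le {R : Type*} [Semiring R] {p : R[X]} {N : ℕ}
    (hdeg : p.natDegree ≤ N) (hlow : ∀ t < N, p.coeff t = 0) : p = C (p.coeff N) * X ^ N := by
  ext t
  rw [coeff_C_mul_X_pow]
  split_ifs with h
  · rw [h]
  rcases lt_or_gt_of_ne h with h | h
  · exact hlow t h
  · exact coeff_eq_zero_of_natDegree_lt (hdeg.trans_lt h)

theorem add_mul_sub_one_eq_mul {n L : ℕ} (hL : 1 ≤ L) : n + n * (L - 1) = n * L := by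
  rw [add_comm, ← Nat.mul_succ, Nat.succ_eq_add_one, Nat.sub_add_cancel hL]

theorem Matrix.map_reflect_mul_map_reflect {R l m o : Type*} [Semiring R] [Fintype m]
    (A : Matrix l m R[X]) (B : Matrix m o R[X]) {a b : ℕ}
    (hA : ∀ i j, (A i j).natDegree ≤ a) (hB : ∀ j k, (B j k).natDegree ≤ b) :
    A.map (reflect a) * B.map (reflect b) = (A * B).map (reflect (a + b)) := by
  ext i k
  simp only [Matrix.mul_apply, Matrix.map_apply, reflect_sum,
    reflect_mul _ _ (hA _ _) (hB _ _)]

theorem Matrix.det_eq_C_det_map_eval_zero {R ι : Type*} [CommRing R] [IsDomain R] [Fintype ι]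
    [DecidableEq ι] {M : Matrix ι ι R[X]} (h : IsUnit M.det) :
    M.det = C (M.map (eval 0)).det := by
  rw [eq_C_of_natDegree_eq_zero (natDegree_eq_zero_of_isUnit h), coeff_zero_eq_eval_zero,
    ← coe_evalRingHom, RingHom.map_det]
  rfl

end General

section PadeSolutions

variable {L n : ℕ} {f : Fin L → PowerSeries ℂ} {Q P : Fin L → Fin L → ℂ[X]}

theorem Qtil_of_le {i j : Fin L} (h : j ≤ i) : Qtil Q i j = Q i j := if_pos h

theorem Qtil_of_lt {i j : Fin L} (h : i < j) : Qtil Q i j = X * Q i j := if_neg (not_le.mpr h)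

theorem Ptil_of_lt {k j : Fin L} (h : j < k) : Ptil P k j = X * P k j := if_pos h

theorem Ptil_of_le {k j : Fin L} (h : k ≤ j) : Ptil P k j = P k j := if_neg (not_lt.mpr h)

theorem IsHPSol.natDegree_Qtil_le (hQ : IsHPSol n f Q) (hn : 0 < n) (i j : Fin L) :
    (Qtil Q i j).natDegree ≤ n := by
  have h := natDegree_le_iff_degree_le.mpr (hQ.1 i j)
  unfold Qtil
  split_ifs at h ⊢
  · omega
  · omega
  · omega
  · exact natDegree_mul_le.trans (by rw [natDegree_X]; omega)

theorem IsHPSol.coeff_Qtil_of_lt (hQ : IsHPSol n f Q) (hn : 0 < n) {i j : Fin L} (hji : j < i) :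
    (Qtil Q i j).coeff n = 0 := by
  have h := natDegree_le_iff_degree_le.mpr (hQ.1 i j)
  rw [if_neg (ne_of_gt hji)] at h
  rw [Qtil_of_le hji.le]
  exact coeff_eq_zero_of_natDegree_lt (by omega)

theorem coeff_Qtil_self {i : Fin L} (hQm : (Q i i).Monic ∧ (Q i i).natDegree = n) :
    (Qtil Q i i).coeff n = 1 := by
  rw [Qtil_of_le le_rfl, ← hQm.2]
  exact hQm.1.coeff_natDegree

theorem coeff_zero_Qtil_of_lt {i j : Fin L} (hij : i < j) : (Qtil Q i j).coeff 0 = 0 := by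
  rw [Qtil_of_lt hij, mul_coeff_zero, coeff_X_zero, zero_mul]

theorem IsSPSol.natDegree_Ptil_le [NeZero L] (hP : IsSPSol n f P) (hm : 0 < n * (L - 1))
    (k j : Fin L) : (Ptil P k j).natDegree ≤ n * (L - 1) := by
  have h := natDegree_le_iff_degree_le.mpr (hP.1 k j)
  unfold Ptil
  split_ifs at h ⊢ with hjk hjk'
  · exact absurd hjk' (ne_of_lt hjk)
  · exact natDegree_mul_le.trans (by rw [natDegree_X]; omega)
  · omega
  · omega

theorem IsSPSol.coeff_Ptil_of_lt [NeZero L] (hP : IsSPSol n f P) (hm : 0 < n * (L - 1))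
    {k j : Fin L} (hkj : k < j) : (Ptil P k j).coeff (n * (L - 1)) = 0 := by
  have h := natDegree_le_iff_degree_le.mpr (hP.1 k j)
  rw [if_neg (ne_of_gt hkj)] at h
  rw [Ptil_of_le hkj.le]
  exact coeff_eq_zero_of_natDegree_lt (by omega)

theorem coeff_Ptil_self {k : Fin L} (hPm : (P k k).Monic ∧ (P k k).natDegree = n * (L - 1)) :
    (Ptil P k k).coeff (n * (L - 1)) = 1 := by
  rw [Ptil_of_le le_rfl, ← hPm.2]
  exact hPm.1.coeff_natDegree

theorem IsSPSol.exists_sub_eq_X_pow_mul [NeZero L] (hP : IsSPSol n f P) (k j : Fin L) :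
    ∃ e : PowerSeries ℂ, f 0 * (Ptil P k j : PowerSeries ℂ) - f j * (Ptil P k 0 : PowerSeries ℂ)
      = PowerSeries.X ^ (n * L) * e ∧ (j < k → PowerSeries.constantCoeff e = 0) := by
  obtain ⟨_, h₀, hlt, hge⟩ := hP
  obtain rfl | hj := eq_or_ne j 0
  · exact ⟨0, by rw [sub_self, mul_zero], fun _ => map_zero _⟩
  replace hj : 1 ≤ (j : ℕ) := Fin.pos_iff_ne_zero.mpr hj
  obtain rfl | hk := eq_or_ne k 0
  · obtain ⟨e, he⟩ := PowerSeries.X_pow_dvd_iff.mpr (h₀ j hj)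
    refine ⟨e, ?_, fun h => absurd h (Fin.not_lt_zero j)⟩
    rwa [Ptil_of_le (Fin.zero_le j), Ptil_of_le le_rfl]
  have hk0 : 0 < k := Fin.pos_iff_ne_zero.mpr hk
  replace hk : 1 ≤ (k : ℕ) := hk0
  by_cases hjk : j < k
  · obtain ⟨e, he⟩ := PowerSeries.X_pow_dvd_iff.mpr (hlt k j hk hj hjk)
    refine ⟨PowerSeries.X * e, ?_, fun _ => by simp⟩
    rw [Ptil_of_lt hjk, Ptil_of_lt hk0, coe_mul, coe_mul, coe_X]
    linear_combination PowerSeries.X * he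
  · obtain ⟨e, he⟩ := PowerSeries.X_pow_dvd_iff.mpr (hge k j hk (not_lt.mp hjk))
    refine ⟨e, ?_, fun h => absurd h hjk⟩
    rwa [Ptil_of_le (not_lt.mp hjk), Ptil_of_lt hk0]

theorem exists_coe_sum_Qtil_mul_Ptil_eq [NeZero L] (hf0 : PowerSeries.constantCoeff (f 0) ≠ 0)
    (hQ : IsHPSol n f Q) (hP : IsSPSol n f P) (i k : Fin L) :
    ∃ h : PowerSeries ℂ, ((∑ j, Qtil Q i j * Ptil P k j : ℂ[X]) : PowerSeries ℂ)
      = PowerSeries.X ^ (n * L) * h ∧ (i < k → PowerSeries.constantCoeff h = 0) := by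
  obtain ⟨ρ, hρ⟩ := PowerSeries.X_pow_dvd_iff.mpr (hQ.2 i)
  choose e he he0 using hP.exists_sub_eq_X_pow_mul k
  obtain ⟨h, hqv, hfh⟩ := exists_dotProduct_eq_mul_of_isUnit (i₀ := 0)
    (q := fun j => (Qtil Q i j : PowerSeries ℂ)) (v := fun j => (Ptil P k j : PowerSeries ℂ))
    (PowerSeries.isUnit_iff_constantCoeff.mpr hf0.isUnit) hρ
    (funext fun j => by simp only [Pi.sub_apply, Pi.smul_apply, smul_eq_mul]; rw [← he j]; ring)
  refine ⟨h, ?_, fun hik => ?_⟩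
  · rw [← hqv, ← coeToPowerSeries.ringHom_apply, map_sum]
    simp only [map_mul, coeToPowerSeries.ringHom_apply, dotProduct]
  · have hconst := congrArg PowerSeries.constantCoeff hfh
    simp only [map_mul, map_add, dotProduct, map_sum, constantCoeff_coe] at hconst
    have hv0 : (Ptil P k 0).coeff 0 = 0 := by
      rw [Ptil_of_lt ((Fin.zero_le i).trans_lt hik), mul_coeff_zero, coeff_X_zero, zero_mul]
    have hsum : ∑ j, (Qtil Q i j).coeff 0 * PowerSeries.constantCoeff (e j) = 0 := by
      refine Finset.sum_eq_zero fun j _ => ?_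
      rcases lt_or_ge i j with hij | hji
      · rw [coeff_zero_Qtil_of_lt hij, zero_mul]
      · rw [he0 j (hji.trans_lt hik), mul_zero]
    rw [hv0, hsum, zero_mul, zero_add] at hconst
    exact (mul_eq_zero.mp hconst).resolve_left hf0

theorem coeff_sum_Qtil_mul_Ptil_of_le [NeZero L] (hQ : IsHPSol n f Q) (hP : IsSPSol n f P)
    (hn : 0 < n) (hm : 0 < n * (L - 1)) {i k : Fin L}
    (hQm : (Q i i).Monic ∧ (Q i i).natDegree = n)
    (hPm : (P i i).Monic ∧ (P i i).natDegree = n * (L - 1)) (hki : k ≤ i) :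
    (∑ j, Qtil Q i j * Ptil P k j).coeff (n + n * (L - 1)) = if i = k then 1 else 0 := by
  simp only [finsetSum_coeff,
    coeff_mul_add_eq_of_natDegree_le (hQ.natDegree_Qtil_le hn _ _) (hP.natDegree_Ptil_le hm _ _)]
  rw [Finset.sum_eq_single i]
  · split_ifs with hik
    · rw [← hik, coeff_Qtil_self hQm, coeff_Ptil_self hPm, one_mul]
    · rw [hP.coeff_Ptil_of_lt hm (lt_of_le_of_ne hki (Ne.symm hik)), mul_zero]
  · intro j _ hji
    rcases lt_or_gt_of_ne hji with h | h
    · rw [hQ.coeff_Qtil_of_lt hn h, zero_mul]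
    · rw [hP.coeff_Ptil_of_lt hm (hki.trans_lt h), mul_zero]
  · simp

theorem sum_Qtil_mul_Ptil [NeZero L] (hL : 2 ≤ L) (hn : 0 < n)
    (hf0 : PowerSeries.constantCoeff (f 0) ≠ 0) (hQ : IsHPSol n f Q) (hP : IsSPSol n f P)
    (hQm : ∀ i, (Q i i).Monic ∧ (Q i i).natDegree = n)
    (hPm : ∀ i, (P i i).Monic ∧ (P i i).natDegree = n * (L - 1)) (i k : Fin L) :
    ∑ j, Qtil Q i j * Ptil P k j = if i = k then X ^ (n * L) else 0 := by
  have hm : 0 < n * (L - 1) := Nat.mul_pos hn (by omega)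
  have hN : n + n * (L - 1) = n * L := add_mul_sub_one_eq_mul (by omega)
  obtain ⟨h, hg, hlt⟩ := exists_coe_sum_Qtil_mul_Ptil_eq hf0 hQ hP i k
  have hcoeff : ∀ t, (∑ j, Qtil Q i j * Ptil P k j).coeff t
      = PowerSeries.coeff t (PowerSeries.X ^ (n * L) * h) := fun t => by rw [← hg, coeff_coe]
  have htop : (∑ j, Qtil Q i j * Ptil P k j).coeff (n * L) = if i = k then 1 else 0 := by
    rcases lt_or_ge i k with hik | hki
    · rw [hcoeff, PowerSeries.coeff_X_pow_mul', if_pos le_rfl, Nat.sub_self,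
        PowerSeries.coeff_zero_eq_constantCoeff_apply, hlt hik, if_neg hik.ne]
    · rw [← hN]
      exact coeff_sum_Qtil_mul_Ptil_of_le hQ hP hn hm (hQm i) (hPm i) hki
  have hdeg : (∑ j, Qtil Q i j * Ptil P k j).natDegree ≤ n * L :=
    natDegree_sum_le_of_forall_le _ _ fun j _ =>
      hN ▸ natDegree_mul_le_of_le (hQ.natDegree_Qtil_le hn i j) (hP.natDegree_Ptil_le hm k j)
  have hlow : ∀ t < n * L, (∑ j, Qtil Q i j * Ptil P k j).coeff t = 0 := fun t ht => by
    rw [hcoeff, PowerSeries.coeff_X_pow_mul', if_neg (by omega)]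
  rw [eq_C_mul_X_pow_of_natDegree_le hdeg hlow, htop]
  split_ifs <;> simp

theorem det_coeff_Qtil_eq_one (hQ : IsHPSol n f Q) (hn : 0 < n)
    (hQm : ∀ i, (Q i i).Monic ∧ (Q i i).natDegree = n) :
    (Matrix.of fun i j => (Qtil Q i j).coeff n).det = 1 := by
  rw [Matrix.det_of_isUpperTriangular (M := Matrix.of fun i j => (Qtil Q i j).coeff n)
    fun i j (hji : j < i) => hQ.coeff_Qtil_of_lt hn hji]
  exact Finset.prod_eq_one fun i _ => coeff_Qtil_self (hQm i)

end PadeSolutions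

/-- The polynomial matrix `R(z) = z^n M_Q(z⁻¹)` has polynomial inverse
`z^{n(L-1)} M_P(z⁻¹)` and determinant 1. -/
theorem R_in_SL (L n : ℕ) (hL : 2 ≤ L) [NeZero L] (hn : 0 < n)
    (f : Fin L → PowerSeries ℂ) (hf0 : PowerSeries.constantCoeff (f 0) ≠ 0)
    (Q P : Fin L → Fin L → Polynomial ℂ)
    (hQ : IsHPSol n f Q) (hP : IsSPSol n f P)
    (hQm : ∀ i, (Q i i).Monic ∧ (Q i i).natDegree = n)
    (hPm : ∀ i, (P i i).Monic ∧ (P i i).natDegree = n * (L - 1)) :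
    let R : Matrix (Fin L) (Fin L) (Polynomial ℂ) :=
      Matrix.of fun i j => Polynomial.reflect n (Qtil Q i j)
    let S : Matrix (Fin L) (Fin L) (Polynomial ℂ) :=
      Matrix.of fun i j => Polynomial.reflect (n * (L - 1)) (Ptil P j i)
    R * S = 1 ∧ S * R = 1 ∧ R.det = 1 := by
  intro R S
  have hm : 0 < n * (L - 1) := Nat.mul_pos hn (by omega)
  have hRS : R * S = 1 := by
    have h := Matrix.map_reflect_mul_map_reflect (Matrix.of (Qtil Q))
      (Matrix.of fun j k => Ptil P k j) (hQ.natDegree_Qtil_le hn)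
      (fun j k => hP.natDegree_Ptil_le hm k j)
    refine h.trans (Matrix.ext fun i k => ?_)
    rw [Matrix.map_apply, Matrix.mul_apply]
    simp only [Matrix.of_apply]
    rw [sum_Qtil_mul_Ptil hL hn hf0 hQ hP hQm hPm i k, add_mul_sub_one_eq_mul (by omega)]
    split_ifs with hik <;> simp [hik, revAt_le, Matrix.one_apply]
  refine ⟨hRS, mul_eq_one_comm.mp hRS, ?_⟩
  have hR0 : R.map (eval 0) = Matrix.of fun i j => (Qtil Q i j).coeff n := by
    ext i j
    simp [R, ← coeff_zero_eq_eval_zero]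
  rw [Matrix.det_eq_C_det_map_eval_zero (Matrix.isUnit_det_of_right_inverse hRS), hR0,
    det_coeff_Qtil_eq_one hQ hn hQm, C_1]
end
end

section
/- Let L ≥ 1, N ≥ 0, let u_0, …, u_{N+1} ∈ ℂ be pairwise distinct, and let A_0, …, A_{N+1} ∈ ℂ^{L×L}. Set A(z) := Σ_{i=0}^{N+1} A_i/(z−u_i), a matrix of rational functions of z. Let R(z) be an L×L matrix of polynomials in z whose determinant is a nonzero constant (so that R(z)^{−1} is again a matrix of polynomials). Then the matrix Â(z) := R(z)A(z)R(z)^{−1} + (dR/dz)(z)·R(z)^{−1} of rational functions satisfies: Â(z) − Σ_{i=0}^{N+1} R(u_i)A_iR(u_i)^{−1}/(z−u_i) is a matrix of polynomials in z. In particular, Â(z) has at most simple poles, all located among u_0, …, u_{N+1}, and its residue at z = u_i equals R(u_i)A_iR(u_i)^{−1}. -/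
/-!
Write `R(z) A_i R(z)⁻¹ = E_i + (z - u_i) Q_i(z)` with `E_i = R(u_i) A_i R(u_i)⁻¹`: since `det R`
is a nonzero constant, `R⁻¹` is a polynomial matrix, so the difference on the left is a polynomial
matrix vanishing at `u_i` and is divisible by `z - u_i`. Hence
`Â - ∑ E_i/(z - u_i) = ∑ Q_i + R' R⁻¹` is polynomial.
-/

open Polynomial

lemma Matrix.X_sub_C_smul_map_divByMonic {m n R : Type*} [CommRing R] (M : Matrix m n R[X])
    (a : R) (h : M.map (eval a) = 0) : (X - C a) • M.map (· /ₘ (X - C a)) = M :=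
  Matrix.ext fun i j => mul_divByMonic_eq_iff_isRoot.2 (congrFun₂ h i j)

lemma RatFunc.X_sub_C_inv_smul_map_algebraMap {m n K : Type*} [Field K] (M : Matrix m n K[X])
    (a : K) (h : M.map (Polynomial.eval a) = 0) :
    (RatFunc.X - RatFunc.C a)⁻¹ • M.map (algebraMap K[X] (RatFunc K)) =
      (M.map (· /ₘ (Polynomial.X - Polynomial.C a))).map (algebraMap K[X] (RatFunc K)) := by
  have hX : RatFunc.X - RatFunc.C a =
      algebraMap K[X] (RatFunc K) (Polynomial.X - Polynomial.C a) := by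
    rw [map_sub, RatFunc.algebraMap_X, RatFunc.algebraMap_C]
  conv_lhs => rw [← Matrix.X_sub_C_smul_map_divByMonic M a h]
  rw [Matrix.map_smulₛₗ _ (algebraMap K[X] (RatFunc K)) _
      (fun _ => by rw [smul_eq_mul, smul_eq_mul, map_mul]), ← hX,
    inv_smul_smul₀ (hX ▸ RatFunc.algebraMap_ne_zero (X_sub_C_ne_zero a))]

variable {n : Type*} [Fintype n] [DecidableEq n]

lemma Matrix.map_nonsing_inv {R S : Type*} [CommRing R] [CommRing S] (f : R →+* S)
    (M : Matrix n n R) (hM : IsUnit M.det) : (M.map f)⁻¹ = M⁻¹.map f :=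
  Matrix.inv_eq_right_inv <| by
    rw [← Matrix.map_mul, Matrix.mul_nonsing_inv M hM, Matrix.map_one _ f.map_zero f.map_one]

lemma Matrix.map_eval_conj_sub_C_conj_map_eval {K : Type*} [CommRing K] (R : Matrix n n K[X])
    (hR : IsUnit R.det) (A : Matrix n n K) (a : K) :
    (R * A.map C * R⁻¹ - (R.map (eval a) * A * (R.map (eval a))⁻¹).map C).map (eval a) =
      0 := by
  have hC : ∀ B : Matrix n n K, (B.map C).map (eval a) = B := fun B => by ext; simp
  change (R * A.map C * R⁻¹ - _).map (evalRingHom a) = 0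
  rw [Matrix.map_sub _ (map_sub _), Matrix.map_mul, Matrix.map_mul,
    ← Matrix.map_nonsing_inv _ _ hR]
  simp only [coe_evalRingHom, hC, sub_self]

lemma RatFunc.exists_X_sub_C_inv_smul_conj_sub_eq_map {K : Type*} [Field K]
    (R : Matrix n n K[X]) (hR : IsUnit R.det) (A : Matrix n n K) (a : K) :
    ∃ Q : Matrix n n K[X],
      (RatFunc.X - RatFunc.C a)⁻¹ • (R.map (algebraMap K[X] (RatFunc K)) * A.map RatFunc.C *
          (R.map (algebraMap K[X] (RatFunc K)))⁻¹) -
        (RatFunc.X - RatFunc.C a)⁻¹ •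
          (R.map (Polynomial.eval a) * A * (R.map (Polynomial.eval a))⁻¹).map RatFunc.C =
      Q.map (algebraMap K[X] (RatFunc K)) := by
  have hC : ∀ B : Matrix n n K,
      B.map RatFunc.C = (B.map Polynomial.C).map (algebraMap K[X] (RatFunc K)) :=
    fun B => by ext; simp
  refine ⟨_, Eq.trans ?_ (RatFunc.X_sub_C_inv_smul_map_algebraMap _ a
    (Matrix.map_eval_conj_sub_C_conj_map_eval R hR A a))⟩
  rw [← smul_sub, hC, hC, Matrix.map_nonsing_inv _ _ hR, ← Matrix.map_mul, ← Matrix.map_mul,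
    ← Matrix.map_sub _ (map_sub _)]

theorem schlesinger_fuchsian_general (L : ℕ) (N : ℕ)
    (u : Fin (N + 2) → ℂ)
    (A : Fin (N + 2) → Matrix (Fin L) (Fin L) ℂ)
    (R : Matrix (Fin L) (Fin L) (Polynomial ℂ))
    (c : ℂ) (hc : c ≠ 0) (hdet : R.det = Polynomial.C c) :
    ∃ B : Matrix (Fin L) (Fin L) (Polynomial ℂ),
      (R.map (algebraMap (Polynomial ℂ) (RatFunc ℂ))) *
            (∑ i, (RatFunc.X - RatFunc.C (u i))⁻¹ • (A i).map (⇑RatFunc.C)) *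
            (R.map (algebraMap (Polynomial ℂ) (RatFunc ℂ)))⁻¹ +
          (R.map fun p => algebraMap (Polynomial ℂ) (RatFunc ℂ) (Polynomial.derivative p)) *
            (R.map (algebraMap (Polynomial ℂ) (RatFunc ℂ)))⁻¹ -
          ∑ i, (RatFunc.X - RatFunc.C (u i))⁻¹ •
              ((R.map (Polynomial.eval (u i)) * A i *
                (R.map (Polynomial.eval (u i)))⁻¹).map (⇑RatFunc.C)) =
        B.map (algebraMap (Polynomial ℂ) (RatFunc ℂ)) := by
  have hR : IsUnit R.det := hdet ▸ isUnit_C.mpr hc.isUnit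
  choose Q hQ using fun i => RatFunc.exists_X_sub_C_inv_smul_conj_sub_eq_map R hR (A i) (u i)
  refine ⟨∑ i, Q i + R.map derivative * R⁻¹, ?_⟩
  have hderiv : (R.map fun p => algebraMap ℂ[X] (RatFunc ℂ) (derivative p)) *
      (R.map (algebraMap ℂ[X] (RatFunc ℂ)))⁻¹ =
      (R.map derivative * R⁻¹).map (algebraMap ℂ[X] (RatFunc ℂ)) := by
    rw [Matrix.map_nonsing_inv _ _ hR, Matrix.map_mul, Matrix.map_map]
    rfl
  rw [hderiv, Matrix.map_add _ (map_add _), Finset.mul_sum, Finset.sum_mul, add_sub_right_comm,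
    ← Finset.sum_sub_distrib]
  simp only [Matrix.mul_smul, Matrix.smul_mul, hQ]
  congr 1
  exact (map_sum (algebraMap ℂ[X] (RatFunc ℂ)).mapMatrix Q _).symm

/-- A Schlesinger transformation with polynomially invertible multiplier `R`
sends a Fuchsian coefficient matrix `A(z) = ∑ Aᵢ/(z-uᵢ)` to
`Â = R A R⁻¹ + R' R⁻¹`, which again has only simple poles at the `uᵢ`
with residues `R(uᵢ) Aᵢ R(uᵢ)⁻¹`. -/
theorem schlesinger_fuchsian (L : ℕ) (hL : 1 ≤ L) (N : ℕ)
    (u : Fin (N + 2) → ℂ) (hu : Function.Injective u)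
    (A : Fin (N + 2) → Matrix (Fin L) (Fin L) ℂ)
    (R : Matrix (Fin L) (Fin L) (Polynomial ℂ))
    (c : ℂ) (hc : c ≠ 0) (hdet : R.det = Polynomial.C c) :
    ∃ B : Matrix (Fin L) (Fin L) (Polynomial ℂ),
      (R.map (algebraMap (Polynomial ℂ) (RatFunc ℂ))) *
            (∑ i, (RatFunc.X - RatFunc.C (u i))⁻¹ • (A i).map (⇑RatFunc.C)) *
            (R.map (algebraMap (Polynomial ℂ) (RatFunc ℂ)))⁻¹ +
          (R.map fun p => algebraMap (Polynomial ℂ) (RatFunc ℂ) (Polynomial.derivative p)) *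
            (R.map (algebraMap (Polynomial ℂ) (RatFunc ℂ)))⁻¹ -
          ∑ i, (RatFunc.X - RatFunc.C (u i))⁻¹ •
              ((R.map (Polynomial.eval (u i)) * A i *
                (R.map (Polynomial.eval (u i)))⁻¹).map (⇑RatFunc.C)) =
        B.map (algebraMap (Polynomial ℂ) (RatFunc ℂ)) :=
  schlesinger_fuchsian_general L N u A R c hc hdet
end

section
/- Fix i with 0 ≤ i ≤ L−1. For 0 ≤ j ≤ L−1 define Q_j^{(i)}(w) as the determinant of the (nL+1)×(nL+1) matrix whose first row carries the monomials (1, w, …, w^{n−1+δ_{ij}}) in the jth block of columns and zeros elsewhere, and whose remaining nL rows form the matrix 𝒜^{(i)}. Then deg Q_j^{(i)} ≤ n−1+δ_{ij} for every j, and the remainder ρ_i := Q_0^{(i)}f_0 + ⋯ + Q_i^{(i)}f_i + wQ_{i+1}^{(i)}f_{i+1} + ⋯ + wQ_{L−1}^{(i)}f_{L−1} satisfies ρ_i = O(w^{nL}); that is, these determinant polynomials solve the Hermite–Padé approximation conditions. -/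
noncomputable section

/-- The coefficient sequence of a power series, extended by `0` to negative indices. -/
def aext (f : PowerSeries ℂ) : ℤ → ℂ :=
  fun j => if 0 ≤ j then PowerSeries.coeff j.toNat f else 0

/-- Entry `(r, c)` (0-indexed) of the `nL × (nL+1)` matrix
`𝒜^{(i)} = [A^0_0(nL,n), …, A^{i-1}_0(nL,n), A^i_0(nL,n+1), A^{i+1}_{-1}(nL,n), …, A^{L-1}_{-1}(nL,n)]`,
where `a k` is the (extended) coefficient sequence of `f_k`. -/
def calA (n i : ℕ) (a : ℕ → ℤ → ℂ) (r c : ℕ) : ℂ :=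
  if c < n * i then a (c / n) ((r : ℤ) - ((c % n : ℕ) : ℤ))
  else if c < n * i + n + 1 then a i ((r : ℤ) - (((c - n * i : ℕ)) : ℤ))
  else a ((c - (n * i + n + 1)) / n + i + 1)
      ((r : ℤ) - ((((c - (n * i + n + 1)) % n : ℕ)) : ℤ) - 1)

/-- The determinant-defined Hermite–Padé polynomial `Q_j^{(i)}(w)`:
the determinant of the `(nL+1) × (nL+1)` matrix whose first row carries the
monomials `1, w, …, w^{n-1+δᵢⱼ}` in the `j`th block of columns and zeros
elsewhere, and whose remaining `nL` rows form `𝒜^{(i)}`. -/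
def Qpoly (L n i j : ℕ) (a : ℕ → ℤ → ℂ) : Polynomial ℂ :=
  Matrix.det (Matrix.of fun r c : Fin (n * L + 1) =>
    if (r : ℕ) = 0 then
      (if n * j + (if i < j then 1 else 0) ≤ (c : ℕ) ∧
          (c : ℕ) < n * j + (if i < j then 1 else 0) + n + (if i = j then 1 else 0) then
        Polynomial.X ^ ((c : ℕ) - (n * j + (if i < j then 1 else 0)))
      else 0)
    else Polynomial.C (calA n i a ((r : ℕ) - 1) (c : ℕ)))

/-- The remainder `ρ_i = Q_0^{(i)}f_0 + ⋯ + Q_i^{(i)}f_i + wQ_{i+1}^{(i)}f_{i+1} + ⋯ + wQ_{L-1}^{(i)}f_{L-1}`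
for the determinant-defined Hermite–Padé polynomials. -/
def rhoRem (L n i : ℕ) (f : ℕ → PowerSeries ℂ) : PowerSeries ℂ :=
  ∑ j ∈ Finset.range L,
    (if j ≤ i then ((Qpoly L n i j (fun k => aext (f k)) : Polynomial ℂ) : PowerSeries ℂ)
     else PowerSeries.X * ((Qpoly L n i j (fun k => aext (f k)) : Polynomial ℂ) : PowerSeries ℂ)) * f j

/-!
Expanding the determinant along its first row gives `Q_j^{(i)} = ∑ D_c w^(c - s_j)`, summed over
the columns `c` of the `j`th block (which starts at column `s_j`), where `D_c` is the signed
maximal minor of `𝒜^{(i)}` with column `c` deleted; the degree bound is read off. In `ρ_i` the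
extra factor `w` for `j > i` turns every term into `D_c w^(c - n j) f_j`, whose coefficient of `w^t`
is exactly the entry `(t, c)` of `𝒜^{(i)}`. So the `t`th coefficient of `ρ_i` is
`∑_c 𝒜^{(i)}_{t,c} D_c`, the first-row expansion of a determinant whose first row repeats
row `t` of `𝒜^{(i)}`; it vanishes for `t < nL`.
-/

namespace Matrix

variable {R : Type*} [CommRing R] {m : ℕ}

def signedMinor (M : Matrix (Fin m) (Fin (m + 1)) R) (c : Fin (m + 1)) : R :=
  (-1) ^ (c : ℕ) * (M.submatrix id c.succAbove).det

theorem det_of_vecCons (v : Fin (m + 1) → R) (M : Matrix (Fin m) (Fin (m + 1)) R) :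
    (of (vecCons v (of.symm M))).det = ∑ c, v c * M.signedMinor c := by
  rw [det_succ_row_zero]
  refine Finset.sum_congr rfl fun c _ => ?_
  rw [signedMinor, show (of (vecCons v (of.symm M))).submatrix Fin.succ c.succAbove
      = M.submatrix id c.succAbove from rfl, of_apply, cons_val_zero]
  ring

theorem sum_mul_signedMinor_eq_zero (M : Matrix (Fin m) (Fin (m + 1)) R) (r : Fin m) :
    ∑ c, M r c * M.signedMinor c = 0 := by
  rw [← det_of_vecCons]
  exact det_zero_of_row_eq (Fin.succ_ne_zero r).symm (by ext; simp)

theorem signedMinor_map {S : Type*} [CommRing S] (φ : R →+* S)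
    (M : Matrix (Fin m) (Fin (m + 1)) R) (c : Fin (m + 1)) :
    (M.map φ).signedMinor c = φ (M.signedMinor c) := by
  rw [signedMinor, signedMinor, map_mul, map_pow, map_neg, map_one, RingHom.map_det]
  rfl

end Matrix

namespace HermitePade

section Blocks

/-- Column `c` of `𝒜^{(i)}` lies in the block of `f_j`; the blocks after the `i`th start one
column late, since the `i`th block has width `n + 1`. -/
abbrev InBlock (n i j c : ℕ) : Prop :=
  n * j + (if i < j then 1 else 0) ≤ c ∧
    c < n * j + (if i < j then 1 else 0) + n + (if i = j then 1 else 0)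

variable {n i j c : ℕ}

theorem inBlock_of_lt (h : j < i) : InBlock n i j c ↔ n * j ≤ c ∧ c < n * j + n := by
  simp [InBlock, h.not_gt, h.ne']

theorem inBlock_self : InBlock n i i c ↔ n * i ≤ c ∧ c ≤ n * i + n := by
  simp [InBlock]

theorem inBlock_of_gt (h : i < j) : InBlock n i j c ↔ n * j < c ∧ c ≤ n * j + n := by
  simp [InBlock, h, h.ne]
  omega

theorem not_inBlock_of_lt {j' : ℕ} (hlt : j < j') (h : InBlock n i j c) : ¬InBlock n i j' c := by
  have := Nat.mul_le_mul_left n (Nat.succ_le_of_lt hlt)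
  rw [Nat.mul_succ] at this
  unfold InBlock at h ⊢
  split_ifs at h ⊢ <;> omega

theorem InBlock.eq {j' : ℕ} (h : InBlock n i j c) (h' : InBlock n i j' c) : j = j' := by
  rcases lt_trichotomy j j' with hlt | heq | hgt
  · exact absurd h' (not_inBlock_of_lt hlt h)
  · exact heq
  · exact absurd h (not_inBlock_of_lt hgt h')

theorem exists_inBlock {L : ℕ} (hi : i < L) (hc : c ≤ n * L) : ∃ j < L, InBlock n i j c := by
  rcases Nat.eq_zero_or_pos n with rfl | hn
  · exact ⟨i, hi, inBlock_self.2 (by simpa using hc)⟩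
  have hdiv := Nat.div_add_mod c n
  have hmod := Nat.mod_lt c hn
  by_cases h₁ : c < n * i
  · have hlt : c / n < i := (Nat.div_lt_iff_lt_mul hn).2 (by rwa [mul_comm])
    exact ⟨c / n, hlt.trans hi, (inBlock_of_lt hlt).2 (by omega)⟩
  by_cases h₂ : c ≤ n * i + n
  · exact ⟨i, hi, inBlock_self.2 (by omega)⟩
  have hdiv' := Nat.div_add_mod (c - 1) n
  have hmod' := Nat.mod_lt (c - 1) hn
  have hgt : i < (c - 1) / n :=
    (Nat.le_div_iff_mul_le hn).2 (by rw [Nat.succ_mul, mul_comm i]; omega)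
  refine ⟨(c - 1) / n, (Nat.div_lt_iff_lt_mul hn).2 (by rw [mul_comm L]; omega),
    (inBlock_of_gt hgt).2 (by omega)⟩

/-- For `j > i` the index shift of `A^j_{-1}` cancels the one-column delay of the block. -/
theorem calA_of_inBlock (a : ℕ → ℤ → ℂ) (r : ℕ) (h : InBlock n i j c) :
    calA n i a r c = a j ((r : ℤ) - ((c - n * j : ℕ) : ℤ)) := by
  rcases lt_trichotomy j i with hji | rfl | hij
  · obtain ⟨hlo, hhi⟩ := (inBlock_of_lt hji).1 h
    have hq : c / n = j :=
      Nat.div_eq_of_lt_le (by rwa [mul_comm]) (by rwa [Nat.succ_mul, mul_comm])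
    have hc : c < n * i :=
      hhi.trans_le (by rw [← Nat.mul_succ]; exact Nat.mul_le_mul_left n hji)
    have hr : c % n = c - n * j := by
      have := Nat.div_add_mod c n
      rw [hq] at this
      omega
    rw [calA, if_pos hc, hq, hr]
  · obtain ⟨hlo, hhi⟩ := inBlock_self.1 h
    rw [calA, if_neg (by omega), if_pos (by omega)]
  · obtain ⟨hlo, hhi⟩ := (inBlock_of_gt hij).1 h
    obtain ⟨k, rfl⟩ : ∃ k, j = i + 1 + k := ⟨j - i - 1, by omega⟩
    have hsplit : n * (i + 1 + k) = n * i + n + n * k := by ring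
    have hd : c - (n * i + n + 1) = (c - n * (i + 1 + k) - 1) + n * k := by omega
    have hn : 0 < n := by omega
    have hlt : c - n * (i + 1 + k) - 1 < n := by omega
    rw [calA, if_neg (by omega), if_neg (by omega), hd, Nat.add_mul_div_left _ _ hn,
      Nat.add_mul_mod_self_left, Nat.div_eq_of_lt hlt, Nat.mod_eq_of_lt hlt]
    congr 1
    · ring
    · omega

theorem calA_eq_sum_inBlock (a : ℕ → ℤ → ℂ) (r : ℕ) {L : ℕ} (hi : i < L)
    (hc : c ≤ n * L) :
    calA n i a r c = ∑ j ∈ Finset.range L,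
      if InBlock n i j c then a j ((r : ℤ) - ((c - n * j : ℕ) : ℤ)) else 0 := by
  obtain ⟨j, hjL, hj⟩ := exists_inBlock hi hc
  rw [Finset.sum_eq_single_of_mem j (Finset.mem_range.2 hjL)
    (fun j' _ hne => if_neg fun h' => hne (h'.eq hj)), if_pos hj, calA_of_inBlock a r hj]

end Blocks

def calAMatrix (L n i : ℕ) (a : ℕ → ℤ → ℂ) :
    Matrix (Fin (n * L)) (Fin (n * L + 1)) ℂ :=
  Matrix.of fun r c => calA n i a r c

@[simp]
theorem calAMatrix_apply (L n i : ℕ) (a : ℕ → ℤ → ℂ) (r : Fin (n * L))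
    (c : Fin (n * L + 1)) :
    calAMatrix L n i a r c = calA n i a r c :=
  rfl

open Polynomial in
theorem Qpoly_eq_sum (L n i j : ℕ) (a : ℕ → ℤ → ℂ) :
    Qpoly L n i j a = ∑ c : Fin (n * L + 1), if InBlock n i j c then
      C ((calAMatrix L n i a).signedMinor c) * X ^ ((c : ℕ) - (n * j + if i < j then 1 else 0))
      else 0 := by
  have hmat : (Matrix.of fun r c : Fin (n * L + 1) =>
      if (r : ℕ) = 0 then
        (if InBlock n i j c then X ^ ((c : ℕ) - (n * j + if i < j then 1 else 0)) else 0)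
      else C (calA n i a ((r : ℕ) - 1) (c : ℕ))) =
      Matrix.of (Matrix.vecCons
        (fun c : Fin (n * L + 1) =>
          if InBlock n i j c then X ^ ((c : ℕ) - (n * j + if i < j then 1 else 0)) else 0)
        (Matrix.of.symm ((calAMatrix L n i a).map C))) := by
    ext r c
    refine Fin.cases ?_ (fun r => ?_) r <;> simp [calAMatrix]
  rw [Qpoly, hmat, Matrix.det_of_vecCons]
  refine Finset.sum_congr rfl fun c _ => ?_
  rw [Matrix.signedMinor_map]
  split_ifs <;> ring

theorem degree_Qpoly_le (L n i j : ℕ) (a : ℕ → ℤ → ℂ) :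
    (Qpoly L n i j a).degree ≤ ((n - 1 + if i = j then 1 else 0 : ℕ) : WithBot ℕ) := by
  rw [Qpoly_eq_sum]
  refine (Polynomial.degree_sum_le _ _).trans (Finset.sup_le fun c _ => ?_)
  by_cases hc : InBlock n i j c
  · rw [if_pos hc]
    refine (Polynomial.degree_C_mul_X_pow_le _ _).trans ?_
    have hexp :
        (c : ℕ) - (n * j + if i < j then 1 else 0) ≤ n - 1 + if i = j then 1 else 0 := by
      unfold InBlock at hc
      split_ifs at hc ⊢ <;> omega
    exact_mod_cast hexp
  · simp [hc]

theorem aext_natCast_sub (f : PowerSeries ℂ) (t e : ℕ) :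
    aext f ((t : ℤ) - (e : ℤ)) = if e ≤ t then PowerSeries.coeff (t - e) f else 0 := by
  unfold aext
  split_ifs <;> first | rfl | omega | (congr 2; omega)

theorem coeff_C_mul_X_pow_mul_eq_aext (f : PowerSeries ℂ) (d : ℂ) (e t : ℕ) :
    PowerSeries.coeff t (PowerSeries.C d * PowerSeries.X ^ e * f) =
      d * aext f ((t : ℤ) - (e : ℤ)) := by
  rw [mul_assoc, PowerSeries.coeff_C_mul, PowerSeries.coeff_X_pow_mul', aext_natCast_sub]

open PowerSeries in
theorem shifted_Qpoly_eq_sum (L n i j : ℕ) (a : ℕ → ℤ → ℂ) :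
    (if j ≤ i then (Qpoly L n i j a : PowerSeries ℂ)
      else X * (Qpoly L n i j a : PowerSeries ℂ)) =
      ∑ c : Fin (n * L + 1), if InBlock n i j c then
        C ((calAMatrix L n i a).signedMinor c) * X ^ ((c : ℕ) - n * j) else 0 := by
  rw [Qpoly_eq_sum, ← Polynomial.coeToPowerSeries.ringHom_apply, map_sum]
  by_cases hji : j ≤ i
  · rw [if_pos hji]
    refine Finset.sum_congr rfl fun c _ => ?_
    by_cases hc : InBlock n i j c
    · rw [if_pos hc, if_pos hc, if_neg hji.not_gt, add_zero]
      simp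
    · rw [if_neg hc, if_neg hc, map_zero]
  · rw [if_neg hji, Finset.mul_sum]
    refine Finset.sum_congr rfl fun c _ => ?_
    by_cases hc : InBlock n i j c
    · obtain ⟨hlo, -⟩ := (inBlock_of_gt (not_le.1 hji)).1 hc
      rw [if_pos hc, if_pos hc, if_pos (not_le.1 hji),
        show (c : ℕ) - n * j = (c - (n * j + 1)) + 1 by omega]
      simp only [Polynomial.coeToPowerSeries.ringHom_apply, Polynomial.coe_mul, Polynomial.coe_C,
        Polynomial.coe_pow, Polynomial.coe_X, pow_succ]
      ring
    · rw [if_neg hc, if_neg hc, map_zero, mul_zero]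

theorem coeff_rhoRem (L n i : ℕ) (f : ℕ → PowerSeries ℂ) (hi : i < L) (t : ℕ) :
    PowerSeries.coeff t (rhoRem L n i f) = ∑ c : Fin (n * L + 1),
      calA n i (fun k => aext (f k)) t c *
        (calAMatrix L n i (fun k => aext (f k))).signedMinor c := by
  set a : ℕ → ℤ → ℂ := fun k => aext (f k)
  set D := (calAMatrix L n i a).signedMinor
  have hterm : ∀ j, PowerSeries.coeff t
      ((if j ≤ i then (Qpoly L n i j a : PowerSeries ℂ)
        else PowerSeries.X * (Qpoly L n i j a : PowerSeries ℂ)) * f j) =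
      ∑ c : Fin (n * L + 1),
        (if InBlock n i j c then a j ((t : ℤ) - ((c - n * j : ℕ) : ℤ)) else 0) * D c := by
    intro j
    rw [shifted_Qpoly_eq_sum, Finset.sum_mul, map_sum]
    refine Finset.sum_congr rfl fun c _ => ?_
    by_cases hc : InBlock n i j c
    · rw [if_pos hc, if_pos hc, coeff_C_mul_X_pow_mul_eq_aext, mul_comm]
    · rw [if_neg hc, if_neg hc, zero_mul, map_zero, zero_mul]
  rw [rhoRem, map_sum, Finset.sum_congr rfl fun j _ => hterm j, Finset.sum_comm]
  refine Finset.sum_congr rfl fun c _ => ?_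
  rw [← Finset.sum_mul, calA_eq_sum_inBlock a t hi (Nat.lt_succ_iff.1 c.2)]

end HermitePade

theorem detQ_solves_HP_general (L n : ℕ)
    (f : ℕ → PowerSeries ℂ)
    (i : ℕ) (hi : i < L) :
    (∀ j < L, (Qpoly L n i j (fun k => aext (f k))).degree ≤
        ((n - 1 + if i = j then 1 else 0 : ℕ) : WithBot ℕ)) ∧
    (∀ t < n * L, PowerSeries.coeff t (rhoRem L n i f) = 0) := by
  refine ⟨fun j _ => HermitePade.degree_Qpoly_le L n i j _, fun t ht => ?_⟩
  rw [HermitePade.coeff_rhoRem L n i f hi]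
  simpa only [HermitePade.calAMatrix_apply] using
    Matrix.sum_mul_signedMinor_eq_zero
      (HermitePade.calAMatrix L n i (fun k => aext (f k))) ⟨t, ht⟩

/-- The determinant polynomials solve the Hermite–Padé approximation conditions. -/
theorem detQ_solves_HP (L n : ℕ) (hL : 2 ≤ L) (hn : 0 < n)
    (f : ℕ → PowerSeries ℂ) (hf0 : PowerSeries.constantCoeff (f 0) ≠ 0)
    (i : ℕ) (hi : i < L) :
    (∀ j < L, (Qpoly L n i j (fun k => aext (f k))).degree ≤
        ((n - 1 + if i = j then 1 else 0 : ℕ) : WithBot ℕ)) ∧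
    (∀ t < n * L, PowerSeries.coeff t (rhoRem L n i f) = 0) :=
  detQ_solves_HP_general L n f i hi
end
end

section
/- Assume in addition that f_0 = 1 (so a^0_j = δ_{j,0}), and set m = n(L−1). Let Q_j^{(i)} be the determinant-defined Hermite–Padé polynomials and ρ_i the corresponding remainder. Then: (a) for every 0 ≤ i ≤ L−1, det[A^0_0(nL,n), …, A^i_0(nL,n), A^{i+1}_{−1}(nL,n), …, A^{L−1}_{−1}(nL,n)] = Δ^{(i+1)}; (b) the coefficient of w^{nL} in ρ_0 equals (−1)^{nL}·Δ^{(L)}; (c) for 1 ≤ i ≤ L−1, Q_i^{(i)}(0) = (−1)^{ni}·Δ^{(i)}. Consequently, if Δ^{(i+1)} ≠ 0 and one divides the ith family by the normalizing constant NQ^{(i)} := (−1)^{n(i+1)}Δ^{(i+1)} (which makes Q_i^{(i)} monic), then the w^{nL}-coefficient of the normalized remainder ρ_0 equals (−1)^{n(L−1)}·Δ^{(L)}/Δ^{(1)}, and the normalized constant term Q_i^{(i)}(0) equals (−1)^n·Δ^{(i)}/Δ^{(i+1)} for 1 ≤ i ≤ L−1. -/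
noncomputable section

/-- The block-Toeplitz determinant `Δ^{(i)}` of size `m = n(L-1)`:
`Δ^{(i)} = det[A^1_n(m,n), …, A^{i-1}_n(m,n), A^i_{n-1}(m,n), …, A^{L-1}_{n-1}(m,n)]`. -/
def Delta (L n : ℕ) (a : ℕ → ℤ → ℂ) (i : ℕ) : ℂ :=
  Matrix.det (Matrix.of fun r c : Fin (n * (L - 1)) =>
    a ((c : ℕ) / n + 1)
      ((if (c : ℕ) / n + 1 < i then (n : ℤ) else (n : ℤ) - 1) +
        ((r : ℕ) : ℤ) - (((c : ℕ) % n : ℕ) : ℤ)))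


/-!
Because `f₀ = 1`, the first column block `A^0` consists of unit vectors, so every determinant
with that leading block collapses to its lower-right minor, which is one of the `Δ^{(i)}`; this
gives (a). At `w = 0` the first row of the determinant defining `Q_i^{(i)}` is the unit vector at
column `ni`, and deleting that column from `𝒜^{(i)}` leaves the matrix of (a) for `i - 1`; this
gives (c). In `ρ₀` the polynomials `Q_j^{(0)}` enter only through their first rows, so the
`w^{nL}`-coefficient of `ρ₀` is a Laplace expansion along one extra row, namely row `nL` of the
natural continuation of `𝒜^{(0)}`. Moving that row to the bottom costs `(-1)^{nL}`, and the
resulting square matrix again has a leading block of unit vectors, leaving `Δ^{(L)}`; this gives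
(b). The normalized identities are then arithmetic with signs.
-/

open Matrix

section Determinants

variable {R : Type*} [CommRing R]

theorem det_of_leading_identity_columns {N k m : ℕ} (hN : N = k + m) (g : ℕ → ℕ → R)
    (hg : ∀ r c, c < k → g r c = if r = c then 1 else 0) :
    det (of fun r c : Fin N => g r c) = det (of fun r c : Fin m => g (k + r) (k + c)) := by
  subst hN
  have hblocks : (of fun r c : Fin (k + m) => g r c).submatrix finSumFinEquiv finSumFinEquiv =
      fromBlocks 1 (of fun (r : Fin k) (c : Fin m) => g r (k + c)) 0
        (of fun r c : Fin m => g (k + r) (k + c)) := by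
    ext (r | r) (c | c) <;> simp [hg, one_apply, Fin.ext_iff]
    omega
  rw [← det_submatrix_equiv_self finSumFinEquiv, hblocks, det_fromBlocks_zero₂₁, det_one,
    one_mul]

def firstRowCofactor (N : ℕ) (B : ℕ → ℕ → R) (c : Fin (N + 1)) : R :=
  (-1) ^ (c : ℕ) * det (of fun r c' : Fin N => B r (c.succAbove c'))

theorem det_of_first_row {N : ℕ} (v : ℕ → R) (B : ℕ → ℕ → R) :
    det (of fun r c : Fin (N + 1) => if (r : ℕ) = 0 then v c else B (r - 1) c) =
      ∑ c : Fin (N + 1), v c * firstRowCofactor N B c := by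
  rw [det_succ_row_zero]
  refine Finset.sum_congr rfl fun c _ => ?_
  simp only [of_apply, Fin.val_eq_zero_iff, Fin.succ_ne_zero, ↓reduceIte, submatrix,
    Fin.val_succ, add_tsub_cancel_right, firstRowCofactor]
  ring

theorem det_of_last_row {N : ℕ} (B : ℕ → ℕ → R) :
    det (of fun r c : Fin (N + 1) => B r c) =
      (-1) ^ N * ∑ c : Fin (N + 1), B N c * firstRowCofactor N B c := by
  rw [det_succ_row _ (Fin.last N), Finset.mul_sum]
  refine Finset.sum_congr rfl fun c _ => ?_
  simp only [Fin.val_last, pow_add, of_apply, submatrix, Fin.succAbove_last, Fin.val_castSucc,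
    firstRowCofactor]
  ring

theorem map_firstRowCofactor {S : Type*} [CommRing S] (φ : R →+* S) {N : ℕ}
    (B : ℕ → ℕ → R) (c : Fin (N + 1)) :
    φ (firstRowCofactor N B c) = firstRowCofactor N (fun r c => φ (B r c)) c := by
  simp only [firstRowCofactor, map_mul, map_pow, map_neg, map_one, RingHom.map_det]
  rfl

end Determinants

theorem mul_eq_add_mul_sub_one {n L : ℕ} (hL : 0 < L) : n * L = n + n * (L - 1) := by
  have := Nat.le_mul_of_pos_right n hL
  rw [Nat.mul_sub_one]
  omega

theorem aext_one (j : ℤ) : aext 1 j = if j = 0 then 1 else 0 := by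
  unfold aext
  split_ifs <;> simp_all [PowerSeries.coeff_one]
  omega

theorem coeff_X_pow_mul_eq_aext (g : PowerSeries ℂ) (k m : ℕ) :
    PowerSeries.coeff k (PowerSeries.X ^ m * g) = aext g (k - m) := by
  rw [PowerSeries.coeff_X_pow_mul', aext]
  split_ifs <;> first | rfl | omega | rw [show ((k : ℤ) - m).toNat = k - m by omega]

/-- Entry `(r, c)` of `[A^0_0(nL,n), …, A^i_0(nL,n), A^{i+1}_{-1}(nL,n), …, A^{L-1}_{-1}(nL,n)]`,
the matrix of part (a). -/
def blockToeplitzEntry (n : ℕ) (a : ℕ → ℤ → ℂ) (i r c : ℕ) : ℂ :=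
  a (c / n) ((r : ℤ) - ((c % n : ℕ) : ℤ) - if c / n ≤ i then 0 else 1)

section BlockToeplitz

variable {L n : ℕ} {a : ℕ → ℤ → ℂ}

theorem det_blockToeplitzEntry (ha0 : ∀ j, a 0 j = if j = 0 then 1 else 0) (hn : 0 < n)
    {i : ℕ} (hi : i < L) :
    det (of fun r c : Fin (n * L) => blockToeplitzEntry n a i r c) = Delta L n a (i + 1) := by
  rw [det_of_leading_identity_columns (k := n) (m := n * (L - 1))
    (mul_eq_add_mul_sub_one (by omega))]
  · unfold Delta
    congr 1
    ext r c
    simp only [blockToeplitzEntry, of_apply, Nat.add_div_left _ hn, Nat.add_mod_left]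
    congr 1
    split_ifs <;> push_cast <;> omega
  · intro r c hc
    simp [blockToeplitzEntry, Nat.div_eq_of_lt hc, Nat.mod_eq_of_lt hc, ha0, sub_eq_zero]

theorem det_calA_zero (ha0 : ∀ j, a 0 j = if j = 0 then 1 else 0) (hL : 0 < L) :
    det (of fun r c : Fin (n * L + 1) => calA n 0 a r c) = Delta L n a L := by
  rw [det_of_leading_identity_columns (k := n + 1) (m := n * (L - 1))
    (by rw [mul_eq_add_mul_sub_one hL]; ring)]
  · unfold Delta
    congr 1
    ext r c
    have hcL : (c : ℕ) / n + 1 < L := by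
      have := Nat.div_lt_of_lt_mul c.isLt
      omega
    simp only [calA, of_apply, if_pos hcL]
    rw [if_neg (by omega), if_neg (by omega), show n + 1 + (c : ℕ) - (n * 0 + n + 1) = c by omega,
      Nat.add_zero]
    congr 1
    push_cast
    ring
  · intro r c hc
    simp [calA, hc, ha0, sub_eq_zero]

theorem calA_succ_of_lt {i r c : ℕ} (h : c < n * (i + 1)) :
    calA n (i + 1) a r c = blockToeplitzEntry n a i r c := by
  have : c / n ≤ i := Nat.lt_succ_iff.mp (Nat.div_lt_of_lt_mul h)
  simp [calA, blockToeplitzEntry, h, this]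

theorem calA_succ_succ_of_le (hn : 0 < n) {i r c : ℕ} (h : n * (i + 1) ≤ c) :
    calA n (i + 1) a r (c + 1) = blockToeplitzEntry n a i r c := by
  obtain ⟨j, s, hs, rfl⟩ : ∃ j s, s < n ∧ c = n * j + s :=
    ⟨c / n, c % n, Nat.mod_lt _ hn, (Nat.div_add_mod c n).symm⟩
  have hj : i < j := Nat.lt_of_mul_lt_mul_left (a := n) (by rw [Nat.mul_succ] at h; omega)
  rw [blockToeplitzEntry, Nat.mul_add_div hn, Nat.mul_add_mod, Nat.div_eq_of_lt hs,
    Nat.mod_eq_of_lt hs, add_zero, if_neg (by omega)]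
  obtain ⟨k, rfl⟩ := Nat.exists_eq_add_of_lt hj
  rcases k with _ | k
  · have hcol : n * (i + 0 + 1) + s + 1 - n * (i + 1) = s + 1 := by rw [add_zero]; omega
    rw [calA, if_neg (by omega), if_pos (by rw [Nat.mul_succ]; omega), hcol]
    congr 1
    push_cast
    ring
  · have hcol : n * (i + (k + 1) + 1) + s + 1 - (n * (i + 1) + n + 1) = n * k + s := by
      rw [show n * (i + (k + 1) + 1) = n * k + (n * (i + 1) + n) by ring]
      omega
    rw [calA, if_neg (by nlinarith), if_neg (by nlinarith), hcol, Nat.mul_add_div hn,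
      Nat.mul_add_mod, Nat.div_eq_of_lt hs, Nat.mod_eq_of_lt hs]
    congr 1
    push_cast
    ring

end BlockToeplitz

def hpMonomialRow (n i j c : ℕ) : Polynomial ℂ :=
  if n * j + (if i < j then 1 else 0) ≤ c ∧
      c < n * j + (if i < j then 1 else 0) + n + (if i = j then 1 else 0) then
    Polynomial.X ^ (c - (n * j + (if i < j then 1 else 0)))
  else 0

theorem Qpoly_eq_sum (L n i j : ℕ) (a : ℕ → ℤ → ℂ) :
    Qpoly L n i j a = ∑ c : Fin (n * L + 1),
      hpMonomialRow n i j c * Polynomial.C (firstRowCofactor (n * L) (calA n i a) c) := by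
  simp only [map_firstRowCofactor (Polynomial.C : ℂ →+* Polynomial ℂ)]
  exact det_of_first_row (N := n * L) (hpMonomialRow n i j) fun r c =>
    Polynomial.C (calA n i a r c)

theorem coeff_zero_hpMonomialRow_self (n i c : ℕ) :
    (hpMonomialRow n i i c).coeff 0 = if c = n * i then 1 else 0 := by
  unfold hpMonomialRow
  split_ifs <;> simp [Polynomial.coeff_X_pow] <;> omega

theorem coeff_zero_Qpoly_succ {L n : ℕ} (a : ℕ → ℤ → ℂ) (hn : 0 < n) {i : ℕ}
    (hi : i + 1 < L) :
    (Qpoly L n (i + 1) (i + 1) a).coeff 0 =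
      (-1) ^ (n * (i + 1)) * det (of fun r c : Fin (n * L) => blockToeplitzEntry n a i r c) := by
  have hcol : n * (i + 1) < n * L + 1 := by
    have := Nat.mul_le_mul_left n hi.le
    omega
  have hsel (x : Fin (n * L + 1)) : (x : ℕ) = n * (i + 1) ↔ x = ⟨n * (i + 1), hcol⟩ := by
    rw [Fin.ext_iff]
  simp only [Qpoly_eq_sum, Polynomial.finsetSum_coeff, Polynomial.coeff_mul_C,
    coeff_zero_hpMonomialRow_self, ite_mul, one_mul, zero_mul, hsel, Finset.sum_ite_eq',
    Finset.mem_univ, if_true, firstRowCofactor]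
  congr 2
  ext r c
  rcases lt_or_ge (c : ℕ) (n * (i + 1)) with hc | hc
  · rw [of_apply, of_apply, Fin.succAbove_of_castSucc_lt _ _ (by simpa [Fin.lt_def] using hc),
      Fin.val_castSucc, calA_succ_of_lt hc]
  · rw [of_apply, of_apply, Fin.succAbove_of_le_castSucc _ _ (by simpa [Fin.le_def] using hc),
      Fin.val_succ, calA_succ_succ_of_le hn hc]

theorem coeff_hpMonomialRow_zero_mul (g : PowerSeries ℂ) (n j c k : ℕ) :
    PowerSeries.coeff k ((if j ≤ 0 then (hpMonomialRow n 0 j c : PowerSeries ℂ)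
        else PowerSeries.X * (hpMonomialRow n 0 j c : PowerSeries ℂ)) * g) =
      if n * j + (if 0 < j then 1 else 0) ≤ c ∧ c ≤ n * j + n then aext g (k - (c - n * j))
      else 0 := by
  rcases Nat.eq_zero_or_pos j with rfl | hj
  · simp only [hpMonomialRow]
    split_ifs <;> simp [coeff_X_pow_mul_eq_aext] <;> omega
  · simp only [hpMonomialRow, if_pos hj, if_neg hj.ne, if_neg (show ¬j ≤ 0 by omega), add_zero]
    split_ifs <;> try omega
    · rw [Polynomial.coe_pow, Polynomial.coe_X, ← pow_succ', coeff_X_pow_mul_eq_aext]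
      congr 1
      omega
    · simp

theorem hpMonomialRow_zero_blocks_disjoint {n j j' c : ℕ} (hjj' : j < j')
    (hj : n * j + (if 0 < j then 1 else 0) ≤ c ∧ c ≤ n * j + n)
    (hj' : n * j' + (if 0 < j' then 1 else 0) ≤ c ∧ c ≤ n * j' + n) : False := by
  have := Nat.mul_le_mul_left n (Nat.succ_le_of_lt hjj')
  rw [Nat.mul_succ, if_pos (by omega)] at *
  omega

theorem sum_coeff_hpMonomialRow_zero_mul {L n : ℕ} (f : ℕ → PowerSeries ℂ) (hn : 0 < n)
    (hL : 0 < L) {c : ℕ} (hc : c ≤ n * L) :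
    ∑ j ∈ Finset.range L, PowerSeries.coeff (n * L)
        ((if j ≤ 0 then (hpMonomialRow n 0 j c : PowerSeries ℂ)
          else PowerSeries.X * (hpMonomialRow n 0 j c : PowerSeries ℂ)) * f j) =
      calA n 0 (fun k => aext (f k)) (n * L) c := by
  simp only [coeff_hpMonomialRow_zero_mul]
  obtain ⟨j, hjL, hj, hval⟩ : ∃ j < L,
      (n * j + (if 0 < j then 1 else 0) ≤ c ∧ c ≤ n * j + n) ∧
      aext (f j) (((n * L : ℕ) : ℤ) - ((c : ℤ) - n * j)) =
        calA n 0 (fun k => aext (f k)) (n * L) c := by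
    rcases le_or_gt c n with hcn | hcn
    · refine ⟨0, hL, by simp [hcn], ?_⟩
      simp [calA, show c < n + 1 by omega]
    · obtain ⟨j, s, hs, rfl⟩ : ∃ j s, s < n ∧ c = n * j + 1 + s :=
        ⟨(c - 1) / n, (c - 1) % n, Nat.mod_lt _ hn, by have := Nat.div_add_mod (c - 1) n; omega⟩
      obtain ⟨j, rfl⟩ : ∃ j', j = j' + 1 :=
        Nat.exists_eq_succ_of_ne_zero (by rintro rfl; omega)
      have hjL : j + 1 < L := Nat.lt_of_mul_lt_mul_left (a := n) (by omega)
      refine ⟨j + 1, hjL, by simp; omega, ?_⟩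
      have hcol : n * (j + 1) + 1 + s - (n * 0 + n + 1) = n * j + s := by rw [Nat.mul_succ]; omega
      rw [calA, if_neg (by omega), if_neg (by rw [Nat.mul_succ]; omega), hcol, Nat.mul_add_div hn,
        Nat.mul_add_mod, Nat.div_eq_of_lt hs, Nat.mod_eq_of_lt hs]
      push_cast
      ring_nf
  rw [Finset.sum_eq_single_of_mem j (Finset.mem_range.mpr hjL), if_pos hj, hval]
  intro j' _ hj'
  rw [if_neg]
  intro hj''
  rcases lt_or_gt_of_ne hj' with h | h
  · exact hpMonomialRow_zero_blocks_disjoint h hj'' hj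
  · exact hpMonomialRow_zero_blocks_disjoint h hj hj''

theorem coeff_rhoRem_zero {L n : ℕ} (f : ℕ → PowerSeries ℂ) (hn : 0 < n) (hL : 0 < L) :
    PowerSeries.coeff (n * L) (rhoRem L n 0 f) =
      (-1) ^ (n * L) *
        det (of fun r c : Fin (n * L + 1) => calA n 0 (fun k => aext (f k)) r c) := by
  have hterm (j : ℕ) : PowerSeries.coeff (n * L)
      ((if j ≤ 0 then (Qpoly L n 0 j (fun k => aext (f k)) : PowerSeries ℂ)
        else PowerSeries.X * (Qpoly L n 0 j (fun k => aext (f k)) : PowerSeries ℂ)) * f j) =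
      ∑ c : Fin (n * L + 1), firstRowCofactor (n * L) (calA n 0 (fun k => aext (f k))) c *
        PowerSeries.coeff (n * L) ((if j ≤ 0 then (hpMonomialRow n 0 j c : PowerSeries ℂ)
          else PowerSeries.X * (hpMonomialRow n 0 j c : PowerSeries ℂ)) * f j) := by
    rw [Qpoly_eq_sum, ← Polynomial.coeToPowerSeries.ringHom_apply, map_sum]
    split_ifs <;>
    · simp only [map_mul, Polynomial.coeToPowerSeries.ringHom_apply, Polynomial.coe_C,
        Finset.mul_sum, Finset.sum_mul, map_sum]
      refine Finset.sum_congr rfl fun c _ => ?_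
      rw [← PowerSeries.coeff_C_mul]
      ring_nf
  rw [det_of_last_row, ← mul_assoc, ← pow_add, Even.neg_one_pow ⟨_, rfl⟩, one_mul, rhoRem,
    map_sum, Finset.sum_congr rfl fun j _ => hterm j, Finset.sum_comm]
  refine Finset.sum_congr rfl fun c _ => ?_
  rw [← Finset.mul_sum, sum_coeff_hpMonomialRow_zero_mul f hn hL (Nat.lt_succ_iff.mp c.isLt),
    mul_comm]

/-- Block-Toeplitz determinant formulae in the case `f₀ = 1`. -/
theorem blockToeplitz_formulae (L n : ℕ) (hL : 2 ≤ L) (hn : 0 < n)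
    (f : ℕ → PowerSeries ℂ) (hf0 : f 0 = 1) :
    (∀ i < L,
      Matrix.det (Matrix.of fun r c : Fin (n * L) =>
        aext (f ((c : ℕ) / n))
          (((r : ℕ) : ℤ) - (((c : ℕ) % n : ℕ) : ℤ) -
            (if (c : ℕ) / n ≤ i then 0 else 1))) =
        Delta L n (fun k => aext (f k)) (i + 1)) ∧
    (PowerSeries.coeff (n * L) (rhoRem L n 0 f) =
      (-1 : ℂ) ^ (n * L) * Delta L n (fun k => aext (f k)) L) ∧
    (∀ i, 1 ≤ i → i < L →
      (Qpoly L n i i (fun k => aext (f k))).coeff 0 =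
        (-1 : ℂ) ^ (n * i) * Delta L n (fun k => aext (f k)) i) ∧
    (Delta L n (fun k => aext (f k)) 1 ≠ 0 →
      PowerSeries.coeff (n * L) (rhoRem L n 0 f) /
          ((-1 : ℂ) ^ n * Delta L n (fun k => aext (f k)) 1) =
        (-1 : ℂ) ^ (n * (L - 1)) * Delta L n (fun k => aext (f k)) L /
          Delta L n (fun k => aext (f k)) 1) ∧
    (∀ i, 1 ≤ i → i < L → Delta L n (fun k => aext (f k)) (i + 1) ≠ 0 →
      (Qpoly L n i i (fun k => aext (f k))).coeff 0 /
          ((-1 : ℂ) ^ (n * (i + 1)) * Delta L n (fun k => aext (f k)) (i + 1)) =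
        (-1 : ℂ) ^ n * Delta L n (fun k => aext (f k)) i /
          Delta L n (fun k => aext (f k)) (i + 1)) := by
  set a : ℕ → ℤ → ℂ := fun k => aext (f k)
  have ha0 (j : ℤ) : a 0 j = if j = 0 then 1 else 0 := by simp only [a, hf0, aext_one]
  have hL0 : 0 < L := by omega
  have partB :
      PowerSeries.coeff (n * L) (rhoRem L n 0 f) = (-1 : ℂ) ^ (n * L) * Delta L n a L := by
    rw [coeff_rhoRem_zero f hn hL0, det_calA_zero ha0 hL0]
  have partC (i : ℕ) (hi : 1 ≤ i) (hiL : i < L) :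
      (Qpoly L n i i a).coeff 0 = (-1 : ℂ) ^ (n * i) * Delta L n a i := by
    obtain ⟨i, rfl⟩ : ∃ i', i = i' + 1 := ⟨i - 1, by omega⟩
    rw [coeff_zero_Qpoly_succ a hn hiL, det_blockToeplitzEntry ha0 hn (by omega)]
  refine ⟨fun i hi => det_blockToeplitzEntry ha0 hn hi, partB, partC, fun hΔ => ?_,
    fun i hi hiL hΔ => ?_⟩
  · rw [partB, mul_eq_add_mul_sub_one hL0, pow_add]
    field_simp
  · rw [partC i hi hiL, mul_add, mul_one, pow_add]
    field_simp
    rw [← pow_mul, Even.neg_one_pow ⟨n, by ring⟩, mul_one]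
end
end

section
/- Assume f_0 = 1 and set m = n(L−1). Define P_0^{(0)}(w) := det of the (m+1)×(m+1) matrix with first row (1, w, …, w^m) and remaining rows the stacked blocks A^1_m(n,m+1), …, A^{L−1}_m(n,m+1); and, for 1 ≤ j ≤ L−1, P_0^{(j)}(w) := det of the m×m matrix with first row (1, w, …, w^{m−1}) and remaining rows the stacked blocks A^1_m(n,m), …, A^{j−1}_m(n,m), A^j_m(n−1,m), A^{j+1}_{m−1}(n,m), …, A^{L−1}_{m−1}(n,m). Define further P_i^{(0)} := [f_i·P_0^{(0)}]_0^{m−1} for 1 ≤ i ≤ L−1, and for 1 ≤ j ≤ L−1: P_i^{(j)} := [f_i·P_0^{(j)}]_0^{m−1} for 1 ≤ i ≤ j−1, P_j^{(j)} := w·[f_j·P_0^{(j)}]_0^{m−1}, and P_i^{(j)} := w·[f_i·P_0^{(j)}]_0^{m−2} for j+1 ≤ i ≤ L−1. Then the tuple (P_i^{(j)}) is a solution of the simultaneous Padé approximation problem for (1, f_1, …, f_{L−1}): deg P_i^{(j)} ≤ m−1+δ_{ij}, P_i^{(0)} − f_iP_0^{(0)} = O(w^{nL}) for 1 ≤ i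 ≤ L−1, and for 1 ≤ j ≤ L−1, P_i^{(j)} − f_iP_0^{(j)} = O(w^{nL}) for 1 ≤ i ≤ j−1 and P_i^{(j)} − f_i·wP_0^{(j)} = O(w^{nL}) for j ≤ i ≤ L−1. -/
noncomputable section

/-- `P_0^{(0)}(w)`: the determinant of the `(m+1) × (m+1)` matrix with first row
`(1, w, …, w^m)` and remaining rows the stacked blocks `A^1_m(n,m+1), …, A^{L-1}_m(n,m+1)`,
where `m = n(L-1)`. -/
def P00 (L n : ℕ) (a : ℕ → ℤ → ℂ) : Polynomial ℂ :=
  Matrix.det (Matrix.of fun r c : Fin (n * (L - 1) + 1) =>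
    if (r : ℕ) = 0 then Polynomial.X ^ (c : ℕ)
    else Polynomial.C (a (((r : ℕ) - 1) / n + 1)
      (((n * (L - 1) : ℕ) : ℤ) + (((((r : ℕ) - 1) % n : ℕ)) : ℤ) - ((c : ℕ) : ℤ))))

/-- `P_0^{(j)}(w)` for `1 ≤ j ≤ L-1`: the determinant of the `m × m` matrix with first
row `(1, w, …, w^{m-1})` and remaining rows the stacked blocks
`A^1_m(n,m), …, A^{j-1}_m(n,m), A^j_m(n-1,m), A^{j+1}_{m-1}(n,m), …, A^{L-1}_{m-1}(n,m)`. -/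
def P0j (L n j : ℕ) (a : ℕ → ℤ → ℂ) : Polynomial ℂ :=
  Matrix.det (Matrix.of fun r c : Fin (n * (L - 1)) =>
    if (r : ℕ) = 0 then Polynomial.X ^ (c : ℕ)
    else Polynomial.C (
      if (r : ℕ) - 1 < (j - 1) * n then
        a (((r : ℕ) - 1) / n + 1)
          (((n * (L - 1) : ℕ) : ℤ) + (((((r : ℕ) - 1) % n : ℕ)) : ℤ) - ((c : ℕ) : ℤ))
      else if (r : ℕ) - 1 < j * n - 1 then
        a j (((n * (L - 1) : ℕ) : ℤ) + ((((r : ℕ) - 1 - (j - 1) * n : ℕ)) : ℤ) - ((c : ℕ) : ℤ))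
      else
        a ((((r : ℕ) - 1 - (j * n - 1)) / n) + j + 1)
          (((n * (L - 1) : ℕ) : ℤ) - 1 +
            (((((r : ℕ) - 1 - (j * n - 1)) % n : ℕ)) : ℤ) - ((c : ℕ) : ℤ))))

/-- The determinant-defined simultaneous Padé polynomials `P_i^{(j)}` (here `Ppoly L n f j i`),
obtained from `P_0^{(j)}` by taking sections of the products `f_i · P_0^{(j)}`. -/
def Ppoly (L n : ℕ) (f : ℕ → PowerSeries ℂ) (j i : ℕ) : Polynomial ℂ :=
  if j = 0 then
    (if i = 0 then P00 L n (fun k => aext (f k))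
     else PowerSeries.trunc (n * (L - 1))
        (f i * ((P00 L n (fun k => aext (f k)) : Polynomial ℂ) : PowerSeries ℂ)))
  else
    (if i = 0 then P0j L n j (fun k => aext (f k))
     else if i < j then
       PowerSeries.trunc (n * (L - 1))
         (f i * ((P0j L n j (fun k => aext (f k)) : Polynomial ℂ) : PowerSeries ℂ))
     else if i = j then
       Polynomial.X * PowerSeries.trunc (n * (L - 1))
         (f j * ((P0j L n j (fun k => aext (f k)) : Polynomial ℂ) : PowerSeries ℂ))
     else
       Polynomial.X * PowerSeries.trunc (n * (L - 1) - 1)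
         (f i * ((P0j L n j (fun k => aext (f k)) : Polynomial ℂ) : PowerSeries ℂ)))

/-!
Applying a linear functional `T` to a determinant whose first row is `(1, w, …, w^{N-1})` and
whose other rows are constant gives the determinant with first row `(T w^c)_c`. For
`T = coeff k (f_i · _)` that row is `(a^i_{k-c})_c`; for `m ≤ k < nL` (shifted by one for the
blocks `A^{i}_{m-1}` with `i > j`) it is literally a row of the block `A^i`, so the coefficient
vanishes. For `T = coeff k` with `k ≥ N` the first row vanishes, which bounds the degree. The
Padé conditions follow because `[g]_0^{N-1} - g = O(w^M)` as soon as the coefficients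
`N, …, M-1` of `g` vanish.
-/

open Polynomial Matrix

theorem LinearMap.map_det_updateRow_map_algebraMap {R S ι : Type*} [CommRing R] [CommRing S]
    [Algebra R S] [Fintype ι] [DecidableEq ι] (T : S →ₗ[R] R) (E : Matrix ι ι R) (i : ι)
    (v : ι → S) :
    T (updateRow (E.map (algebraMap R S)) i v).det = (updateRow E i (T ∘ v)).det := by
  -- expand along row `i`: the cofactors come from `E` and are scalars for `T`
  have hcof : ∀ j, (updateRow (E.map (algebraMap R S)) i v).adjugate j i
      = algebraMap R S ((updateRow E i (T ∘ v)).adjugate j i) := by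
    intro j
    rw [adjugate_apply, adjugate_apply, updateRow_idem, updateRow_idem, RingHom.map_det,
      RingHom.mapMatrix_apply, map_updateRow]
    congr 2
    ext k
    rw [Function.comp_apply, Pi.apply_single (fun _ => algebraMap R S) (fun _ => map_zero _),
      map_one]
  simp only [det_eq_sum_mul_adjugate_row _ i, updateRow_self, hcof, map_sum, Function.comp_apply]
  refine Finset.sum_congr rfl fun j _ => ?_
  rw [mul_comm, ← Algebra.smul_def, map_smul, smul_eq_mul, mul_comm]

section MonomialRowMatrix

variable {R : Type*} [CommRing R] {N : ℕ}

/-- `P00` and `P0j` are determinants of such matrices; row `0` of `E` is ignored. -/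
def monomialRowMatrix (E : Fin N → Fin N → R) : Matrix (Fin N) (Fin N) R[X] :=
  of fun r c => if (r : ℕ) = 0 then X ^ (c : ℕ) else C (E r c)

theorem monomialRowMatrix_eq_updateRow (E : Fin N → Fin N → R) {i : Fin N}
    (hi : (i : ℕ) = 0) :
    monomialRowMatrix E = updateRow ((of E).map C) i fun c => X ^ (c : ℕ) := by
  ext r c : 1
  by_cases hr : r = i
  · simp [monomialRowMatrix, hr, hi]
  · have hr0 : (r : ℕ) ≠ 0 := fun h => hr (Fin.ext (h.trans hi.symm))
    simp [monomialRowMatrix, hr, hr0]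

theorem LinearMap.map_det_monomialRowMatrix (T : R[X] →ₗ[R] R) (E : Fin N → Fin N → R)
    {i : Fin N} (hi : (i : ℕ) = 0) :
    T (monomialRowMatrix E).det = (updateRow (of E) i fun c => T (X ^ (c : ℕ))).det := by
  rw [monomialRowMatrix_eq_updateRow E hi, ← algebraMap_eq, T.map_det_updateRow_map_algebraMap]
  rfl

theorem degree_det_monomialRowMatrix_lt (hN : 0 < N) (E : Fin N → Fin N → R) :
    (monomialRowMatrix E).det.degree < N := by
  rw [degree_lt_iff_coeff_zero]
  intro k hk
  rw [← lcoeff_apply, (lcoeff R k).map_det_monomialRowMatrix E (i := ⟨0, hN⟩) rfl]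
  refine det_eq_zero_of_row_eq_zero ⟨0, hN⟩ fun c => ?_
  simp [coeff_X_pow, show k ≠ c by omega]

end MonomialRowMatrix

theorem bigOh_trunc_sub {g : PowerSeries ℂ} {N M : ℕ}
    (h : ∀ s, N + s < M → PowerSeries.coeff (N + s) g = 0) :
    bigOh ((PowerSeries.trunc N g : PowerSeries ℂ) - g) M := by
  intro t ht
  rw [map_sub, coeff_coe, PowerSeries.coeff_trunc]
  split_ifs with htN
  · exact sub_self _
  · obtain ⟨s, rfl⟩ := Nat.exists_eq_add_of_le (not_lt.1 htN)
    rw [h s ht, sub_zero]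

theorem bigOh_X_mul {g : PowerSeries ℂ} {M : ℕ} (h : bigOh g M) :
    bigOh (PowerSeries.X * g) (M + 1) := by
  rintro (_ | t) ht
  · simp
  · rw [PowerSeries.coeff_succ_X_mul]
    exact h t (by omega)

theorem bigOh_X_mul_trunc_sub {f P : PowerSeries ℂ} {N M : ℕ}
    (h : ∀ s, N + s + 1 < M → PowerSeries.coeff (N + s) (f * P) = 0) :
    bigOh (((X * PowerSeries.trunc N (f * P) : ℂ[X]) : PowerSeries ℂ)
      - f * (PowerSeries.X * P)) M := by
  obtain _ | M := M
  · exact fun _ h => absurd h (Nat.not_lt_zero _)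
  have hX : ((X * PowerSeries.trunc N (f * P) : ℂ[X]) : PowerSeries ℂ) - f * (PowerSeries.X * P)
      = PowerSeries.X * ((PowerSeries.trunc N (f * P) : PowerSeries ℂ) - f * P) := by
    push_cast
    ring
  rw [hX]
  exact bigOh_X_mul (bigOh_trunc_sub fun s hs => h s (by omega))

theorem degree_le_pred_of_degree_lt {R : Type*} [Semiring R] {p : R[X]} {N : ℕ}
    (h : p.degree < N) : p.degree ≤ (N - 1 : ℕ) := by
  rw [degree_lt_iff_coeff_zero] at h
  rw [degree_le_iff_coeff_zero]
  intro k hk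
  have hk' : N - 1 < k := by exact_mod_cast hk
  exact h k (by omega)

theorem degree_X_mul_lt {R : Type*} [Semiring R] {p : R[X]} {N : ℕ}
    (h : p.degree < N) : (X * p).degree < ((N + 1 : ℕ) : WithBot ℕ) := by
  rw [degree_lt_iff_coeff_zero] at h ⊢
  rintro (_ | k) hk
  · simp at hk
  · rw [coeff_X_mul]
    exact h k (by omega)

theorem coeff_mul_X_pow_eq_aext (f : PowerSeries ℂ) (k c : ℕ) :
    PowerSeries.coeff k (f * PowerSeries.X ^ c) = aext f (k - c) := by
  rw [PowerSeries.coeff_mul_X_pow', aext]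
  by_cases h : c ≤ k
  · rw [if_pos h, if_pos (by omega), show ((k : ℤ) - c).toNat = k - c by omega]
  · rw [if_neg h, if_neg (by omega)]

theorem coeff_mul_det_monomialRowMatrix_eq_zero {N k : ℕ} (f : PowerSeries ℂ)
    (E : Fin N → Fin N → ℂ) (r : Fin N) (hr : (r : ℕ) ≠ 0)
    (hrow : ∀ c : Fin N, E r c = aext f (k - c)) :
    PowerSeries.coeff k (f * ((monomialRowMatrix E).det : PowerSeries ℂ)) = 0 := by
  let T : ℂ[X] →ₗ[ℂ] ℂ := PowerSeries.coeff k ∘ₗ LinearMap.mulLeft ℂ f ∘ₗ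
    (coeToPowerSeries.algHom ℂ).toLinearMap
  let i : Fin N := ⟨0, by omega⟩
  -- the `k`-th coefficient of `f * det` is a determinant whose rows `0` and `r` agree
  change T (monomialRowMatrix E).det = 0
  rw [T.map_det_monomialRowMatrix E (i := i) rfl]
  refine det_zero_of_row_eq (i := i) (j := r) (fun h => hr (by simp [← h, i]))
    (funext fun c => ?_)
  rw [updateRow_self, updateRow_ne (fun h => hr (by simp [h, i])), of_apply, hrow]
  simp [T, coeff_mul_X_pow_eq_aext]

theorem coeff_mul_P00_eq_zero {L n i s : ℕ} (f : ℕ → PowerSeries ℂ) (hi : 1 ≤ i)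
    (hiL : i < L) (hs : s < n) :
    PowerSeries.coeff (n * (L - 1) + s)
      (f i * (P00 L n (fun k => aext (f k)) : PowerSeries ℂ)) = 0 := by
  obtain ⟨q, rfl⟩ : ∃ q, i = q + 1 := ⟨i - 1, by omega⟩
  have hb : q * n + n ≤ n * (L - 1) := by
    linarith [Nat.mul_le_mul_right n (show q + 1 ≤ L - 1 by omega)]
  obtain ⟨hdiv, hmod⟩ := (Nat.div_mod_unique (by omega : 0 < n)).2
    ⟨(by ring : s + n * q = q * n + s), hs⟩
  refine coeff_mul_det_monomialRowMatrix_eq_zero _ _ ⟨q * n + s + 1, by omega⟩ (by simp)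
    fun c => ?_
  simp only [Nat.add_sub_cancel, hdiv, hmod]
  push_cast
  ring_nf

theorem coeff_mul_P0j_eq_zero_of_lt {L n j i s : ℕ} (f : ℕ → PowerSeries ℂ) (hi : 1 ≤ i)
    (hij : i < j) (hjL : j < L) (hs : s < n) :
    PowerSeries.coeff (n * (L - 1) + s)
      (f i * (P0j L n j (fun k => aext (f k)) : PowerSeries ℂ)) = 0 := by
  obtain ⟨q, rfl⟩ : ∃ q, i = q + 1 := ⟨i - 1, by omega⟩
  have hb : q * n + n + n ≤ n * (L - 1) := by
    linarith [Nat.mul_le_mul_right n (show q + 2 ≤ L - 1 by omega)]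
  have hbj : q * n + n ≤ (j - 1) * n := by
    linarith [Nat.mul_le_mul_right n (show q + 1 ≤ j - 1 by omega)]
  obtain ⟨hdiv, hmod⟩ := (Nat.div_mod_unique (by omega : 0 < n)).2
    ⟨(by ring : s + n * q = q * n + s), hs⟩
  refine coeff_mul_det_monomialRowMatrix_eq_zero _ _ ⟨q * n + s + 1, by omega⟩ (by simp)
    fun c => ?_
  simp only [Nat.add_sub_cancel, if_pos (by omega : q * n + s < (j - 1) * n), hdiv, hmod]
  push_cast
  ring_nf

theorem coeff_mul_P0j_self_eq_zero {L n j s : ℕ} (f : ℕ → PowerSeries ℂ) (hj : 1 ≤ j)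
    (hjL : j < L) (hs : s + 1 < n) :
    PowerSeries.coeff (n * (L - 1) + s)
      (f j * (P0j L n j (fun k => aext (f k)) : PowerSeries ℂ)) = 0 := by
  obtain ⟨q, rfl⟩ : ∃ q, j = q + 1 := ⟨j - 1, by omega⟩
  have hqn : (q + 1) * n = q * n + n := by ring
  have hb : q * n + n ≤ n * (L - 1) := by
    linarith [Nat.mul_le_mul_right n (show q + 1 ≤ L - 1 by omega)]
  refine coeff_mul_det_monomialRowMatrix_eq_zero _ _ ⟨q * n + s + 1, by omega⟩
    (by simp) fun c => ?_
  simp only [Nat.add_sub_cancel, if_neg (by omega : ¬q * n + s < q * n),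
    if_pos (by omega : q * n + s < (q + 1) * n - 1), Nat.add_sub_cancel_left]
  push_cast
  ring_nf

theorem coeff_mul_P0j_eq_zero_of_gt {L n j i s : ℕ} (f : ℕ → PowerSeries ℂ) (hj : 1 ≤ j)
    (hji : j < i) (hiL : i < L) (hs : s < n) :
    PowerSeries.coeff (n * (L - 1) - 1 + s)
      (f i * (P0j L n j (fun k => aext (f k)) : PowerSeries ℂ)) = 0 := by
  obtain ⟨q, rfl⟩ : ∃ q, j = q + 1 := ⟨j - 1, by omega⟩
  obtain ⟨p, rfl⟩ : ∃ p, i = q + p + 2 := ⟨i - q - 2, by omega⟩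
  have hqn : (q + 1) * n = q * n + n := by ring
  have hb : q * n + p * n + n + n ≤ n * (L - 1) := by
    linarith [Nat.mul_le_mul_right n (show q + p + 2 ≤ L - 1 by omega)]
  obtain ⟨hdiv, hmod⟩ := (Nat.div_mod_unique (by omega : 0 < n)).2
    ⟨(by ring : s + n * p = p * n + s), hs⟩
  have hrow : q * n + p * n + n + s - 1 - ((q + 1) * n - 1) = p * n + s := by omega
  refine coeff_mul_det_monomialRowMatrix_eq_zero _ _ ⟨q * n + p * n + n + s, by omega⟩
    (by simp only; omega) fun c => ?_
  simp only [Nat.add_sub_cancel, if_neg (by omega : ¬q * n + p * n + n + s - 1 < q * n),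
    if_neg (by omega : ¬q * n + p * n + n + s - 1 < (q + 1) * n - 1), hrow, hdiv, hmod]
  rw [show p + (q + 1) + 1 = q + p + 2 by ring, Nat.cast_add, Nat.cast_sub (by omega)]
  push_cast
  ring_nf

theorem degree_Ppoly_lt {L n j i : ℕ} (hn : 0 < n) (f : ℕ → PowerSeries ℂ) (hj : j < L)
    (hi : i < L) :
    (Ppoly L n f j i).degree < ((n * (L - 1) + if i = j then 1 else 0 : ℕ) : WithBot ℕ) := by
  have htrunc := PowerSeries.degree_trunc_lt (R := ℂ)
  rcases Nat.eq_zero_or_pos j with rfl | hj0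
  · rcases Nat.eq_zero_or_pos i with rfl | hi0
    · simp only [Ppoly, if_true]
      exact degree_det_monomialRowMatrix_lt (Nat.succ_pos _) _
    · simp only [Ppoly, if_true, if_neg hi0.ne', add_zero]
      exact htrunc _ _
  have hm : 0 < n * (L - 1) := Nat.mul_pos hn (by omega)
  rcases Nat.eq_zero_or_pos i with rfl | hi0
  · simp only [Ppoly, if_neg hj0.ne', if_true, if_neg hj0.ne, add_zero]
    exact degree_det_monomialRowMatrix_lt hm _
  rcases lt_trichotomy i j with hij | rfl | hji
  · simp only [Ppoly, if_neg hj0.ne', if_neg hi0.ne', if_pos hij, if_neg hij.ne, add_zero]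
    exact htrunc _ _
  · simp only [Ppoly, if_neg hj0.ne', lt_irrefl, if_true, if_false]
    exact degree_X_mul_lt (htrunc _ _)
  · simp only [Ppoly, if_neg hj0.ne', if_neg hi0.ne', if_neg (by omega : ¬i < j),
      if_neg hji.ne', add_zero]
    rw [← Nat.sub_add_cancel hm]
    exact degree_X_mul_lt (htrunc _ _)

theorem bigOh_Ppoly_zero_sub {L n i : ℕ} (f : ℕ → PowerSeries ℂ) (hi : 1 ≤ i)
    (hiL : i < L) :
    bigOh ((Ppoly L n f 0 i : PowerSeries ℂ)
      - f i * (Ppoly L n f 0 0 : PowerSeries ℂ)) (n * L) := by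
  have hnL : n * (L - 1) + n = n * L := by
    rw [← Nat.mul_add_one, Nat.sub_add_cancel (by omega)]
  simp only [Ppoly, if_true, if_neg (by omega : i ≠ 0)]
  exact bigOh_trunc_sub fun s hs => coeff_mul_P00_eq_zero f hi hiL (by omega)

theorem bigOh_Ppoly_sub_of_lt {L n j i : ℕ} (f : ℕ → PowerSeries ℂ) (hi : 1 ≤ i)
    (hij : i < j) (hjL : j < L) :
    bigOh ((Ppoly L n f j i : PowerSeries ℂ)
      - f i * (Ppoly L n f j 0 : PowerSeries ℂ)) (n * L) := by
  have hnL : n * (L - 1) + n = n * L := by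
    rw [← Nat.mul_add_one, Nat.sub_add_cancel (by omega)]
  simp only [Ppoly, if_neg (by omega : j ≠ 0), if_neg (by omega : i ≠ 0), if_true, if_pos hij]
  exact bigOh_trunc_sub fun s hs => coeff_mul_P0j_eq_zero_of_lt f hi hij hjL (by omega)

theorem bigOh_Ppoly_sub_X_mul_of_le {L n j i : ℕ} (f : ℕ → PowerSeries ℂ) (hj : 1 ≤ j)
    (hji : j ≤ i) (hiL : i < L) :
    bigOh ((Ppoly L n f j i : PowerSeries ℂ)
      - f i * (PowerSeries.X * (Ppoly L n f j 0 : PowerSeries ℂ))) (n * L) := by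
  have hnL : n * (L - 1) + n = n * L := by
    rw [← Nat.mul_add_one, Nat.sub_add_cancel (by omega)]
  rcases hji.eq_or_lt with rfl | hji
  · simp only [Ppoly, if_neg (by omega : j ≠ 0), if_true, lt_irrefl, if_false]
    exact bigOh_X_mul_trunc_sub fun s hs => coeff_mul_P0j_self_eq_zero f hj hiL (by omega)
  · simp only [Ppoly, if_neg (by omega : j ≠ 0), if_neg (by omega : i ≠ 0), if_true,
      if_neg (by omega : ¬i < j), if_neg hji.ne']
    exact bigOh_X_mul_trunc_sub fun s hs =>
      coeff_mul_P0j_eq_zero_of_gt f hj hji hiL (by omega)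

theorem detP_solves_SP_general (L n : ℕ) (hn : 0 < n)
    (f : ℕ → PowerSeries ℂ) :
    (∀ j < L, ∀ i < L, (Ppoly L n f j i).degree ≤
        ((n * (L - 1) - 1 + if i = j then 1 else 0 : ℕ) : WithBot ℕ)) ∧
    (∀ i, 1 ≤ i → i < L →
      bigOh (((Ppoly L n f 0 i : Polynomial ℂ) : PowerSeries ℂ)
        - f i * ((Ppoly L n f 0 0 : Polynomial ℂ) : PowerSeries ℂ)) (n * L)) ∧
    (∀ j i, 1 ≤ j → j < L → 1 ≤ i → i < j →
      bigOh (((Ppoly L n f j i : Polynomial ℂ) : PowerSeries ℂ)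
        - f i * ((Ppoly L n f j 0 : Polynomial ℂ) : PowerSeries ℂ)) (n * L)) ∧
    (∀ j i, 1 ≤ j → j < L → j ≤ i → i < L →
      bigOh (((Ppoly L n f j i : Polynomial ℂ) : PowerSeries ℂ)
        - f i * (PowerSeries.X *
            ((Ppoly L n f j 0 : Polynomial ℂ) : PowerSeries ℂ))) (n * L)) := by
  refine ⟨fun j hj i hi => ?_, fun i hi hiL => bigOh_Ppoly_zero_sub f hi hiL,
    fun j i _ hjL hi hij => bigOh_Ppoly_sub_of_lt f hi hij hjL,
    fun j i hj _ hji hiL => bigOh_Ppoly_sub_X_mul_of_le f hj hji hiL⟩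
  refine (degree_le_pred_of_degree_lt (degree_Ppoly_lt hn f hj hi)).trans ?_
  exact_mod_cast (by split_ifs <;> omega)

/-- The determinant-defined polynomials solve the simultaneous Padé approximation
problem for `(1, f_1, …, f_{L-1})`. -/
theorem detP_solves_SP (L n : ℕ) (hL : 2 ≤ L) (hn : 0 < n)
    (f : ℕ → PowerSeries ℂ) (hf0 : f 0 = 1) :
    (∀ j < L, ∀ i < L, (Ppoly L n f j i).degree ≤
        ((n * (L - 1) - 1 + if i = j then 1 else 0 : ℕ) : WithBot ℕ)) ∧
    (∀ i, 1 ≤ i → i < L →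
      bigOh (((Ppoly L n f 0 i : Polynomial ℂ) : PowerSeries ℂ)
        - f i * ((Ppoly L n f 0 0 : Polynomial ℂ) : PowerSeries ℂ)) (n * L)) ∧
    (∀ j i, 1 ≤ j → j < L → 1 ≤ i → i < j →
      bigOh (((Ppoly L n f j i : Polynomial ℂ) : PowerSeries ℂ)
        - f i * ((Ppoly L n f j 0 : Polynomial ℂ) : PowerSeries ℂ)) (n * L)) ∧
    (∀ j i, 1 ≤ j → j < L → j ≤ i → i < L →
      bigOh (((Ppoly L n f j i : Polynomial ℂ) : PowerSeries ℂ)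
        - f i * (PowerSeries.X *
            ((Ppoly L n f j 0 : Polynomial ℂ) : PowerSeries ℂ))) (n * L)) :=
  detP_solves_SP_general L n hn f
end
end

section
/- Let {a^k_j}_{j≥0} ⊂ ℂ (1 ≤ k ≤ L−1) be arbitrary sequences, extended by a^k_j := 0 for j < 0, and set m = n(L−1). Then det of the (m+1)×(m+1) matrix with first row (0, …, 0, 1) (the 1 in the last position) and remaining rows the stacked blocks A^1_m(n,m+1), …, A^{L−1}_m(n,m+1) equals (−1)^m·det of the m×m matrix with rows the stacked blocks A^1_m(n,m), …, A^{L−1}_m(n,m), which in turn equals (−1)^{m(m−n)/2 + n(L−1)}·Δ^{(L)}. -/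
/-!
Expanding along the first row, whose only nonzero entry is the `1` in the last column, gives the
first identity with the cofactor sign `(-1)^m`. The remaining `m × m` matrix is the transpose of
the matrix of `Δ^{(L)}` after reversing the order of all its columns and the order of the rows
inside each of the `k = L - 1` blocks of size `n`. With `m = n k` these reversals have signs
`(-1)^(m choose 2)` and `(-1)^(k (n choose 2))`, and since
`(n k choose 2) = k (n choose 2) + n² (k choose 2)` their product is `(-1)^(n² (k choose 2))`,
which equals `(-1)^(m (m - n) / 2)`.
-/

noncomputable section

/-- A sequence `ℕ → ℂ` extended by `0` to negative indices. -/
def hz (h : ℕ → ℕ → ℂ) (k : ℕ) : ℤ → ℂ := fun j => if 0 ≤ j then h k j.toNat else 0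

open Equiv Matrix

variable {R : Type*} [CommRing R]

theorem det_of_row_zero_eq_single_last {m : ℕ} (f : ℕ → Fin (m + 1) → R) :
    det (of fun r c : Fin (m + 1) =>
        if (r : ℕ) = 0 then (if (c : ℕ) = m then (1 : R) else 0) else f ((r : ℕ) - 1) c) =
      (-1) ^ m * det (of fun r c : Fin m => f r c.castSucc) := by
  rw [det_succ_row_zero, Finset.sum_eq_single (Fin.last m)]
  · simp [Fin.succAbove_last, submatrix]
  · intro j _ hj
    have hjm : (j : ℕ) ≠ m := fun h => hj (Fin.ext h)
    simp [hjm]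
  · simp

theorem Fin.revPerm_succ_eq (k : ℕ) :
    (Fin.revPerm : Perm (Fin (k + 1))) =
      Perm.decomposeFin.symm (0, Fin.revPerm) * finRotate (k + 1) := by
  ext i
  induction i using Fin.lastCases with
  | last => simp
  | cast j => simp [Fin.rev_castSucc]

theorem Fin.sign_revPerm (k : ℕ) : Perm.sign (Fin.revPerm : Perm (Fin k)) = (-1) ^ k.choose 2 := by
  induction k with
  | zero => rfl
  | succ k ih =>
    rw [Fin.revPerm_succ_eq, map_mul, Perm.decomposeFin.symm_sign, ih, sign_finRotate,
      Nat.choose_succ_succ', Nat.choose_one_right, pow_add]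
    simp [mul_comm]

theorem Nat.choose_two_mul (n k : ℕ) :
    (n * k).choose 2 = k * n.choose 2 + n ^ 2 * k.choose 2 := by
  apply Nat.cast_injective (R := ℚ)
  push_cast [Nat.cast_choose_two]
  ring

theorem Nat.mul_mul_sub_div_two (n k : ℕ) : n * k * (n * k - n) / 2 = n ^ 2 * k.choose 2 := by
  rw [Nat.choose_two_right, ← Nat.mul_div_assoc _ (Nat.even_mul_pred_self k).two_dvd,
    ← Nat.mul_sub_one]
  ring_nf

def blockRevPerm (n k : ℕ) : Perm (Fin (n * k)) :=
  (finProdFinEquiv.trans (finCongr (Nat.mul_comm k n))).permCongr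
    (prodCongrRight fun _ => Fin.revPerm)

theorem blockRevPerm_val (n k : ℕ) (r : Fin (n * k)) :
    (blockRevPerm n k r : ℕ) = n - 1 - r % n + n * (r / n) := by
  have := Nat.mod_lt r (Nat.pos_of_mul_pos_right r.pos)
  simp only [blockRevPerm, permCongr_apply, symm_trans, finCongr_symm, trans_apply,
    finCongr_apply, finProdFinEquiv_symm_apply, prodCongrRight_apply, Fin.revPerm_apply,
    Fin.val_cast, finProdFinEquiv_apply_val, Fin.val_rev, Fin.coe_modNat, Fin.coe_divNat,
    Nat.add_right_cancel_iff]
  omega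

theorem blockRevPerm_div (n k : ℕ) (r : Fin (n * k)) :
    (blockRevPerm n k r : ℕ) / n = r / n := by
  have hn := Nat.pos_of_mul_pos_right r.pos
  rw [blockRevPerm_val, Nat.add_mul_div_left _ _ hn, Nat.div_eq_of_lt (by omega), zero_add]

theorem blockRevPerm_mod (n k : ℕ) (r : Fin (n * k)) :
    (blockRevPerm n k r : ℕ) % n = n - 1 - r % n := by
  rw [blockRevPerm_val, Nat.add_mul_mod_self_left, Nat.mod_eq_of_lt]
  have := Nat.pos_of_mul_pos_right r.pos
  omega

theorem sign_blockRevPerm (n k : ℕ) :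
    Perm.sign (blockRevPerm n k) = (-1) ^ (k * n.choose 2) := by
  simp [blockRevPerm, Perm.sign_permCongr, Perm.sign_prodCongrRight, Fin.sign_revPerm, pow_mul']

theorem det_rowBlocks_eq_det_colBlocks (a : ℕ → ℤ → R) (n k : ℕ) :
    det (of fun r c : Fin (n * k) =>
        a ((r : ℕ) / n + 1) (((n * k : ℕ) : ℤ) + (((r : ℕ) % n : ℕ) : ℤ) - ((c : ℕ) : ℤ))) =
      (-1) ^ (n ^ 2 * k.choose 2) *
        det (of fun r c : Fin (n * k) =>
          a ((c : ℕ) / n + 1) ((n : ℤ) + ((r : ℕ) : ℤ) - (((c : ℕ) % n : ℕ) : ℤ))) := by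
  set D : Matrix (Fin (n * k)) (Fin (n * k)) R := of fun r c =>
    a ((c : ℕ) / n + 1) ((n : ℤ) + ((r : ℕ) : ℤ) - (((c : ℕ) % n : ℕ) : ℤ))
  have hperm : (of fun r c : Fin (n * k) =>
      a ((r : ℕ) / n + 1) (((n * k : ℕ) : ℤ) + (((r : ℕ) % n : ℕ) : ℤ) - ((c : ℕ) : ℤ))) =
      (Dᵀ.submatrix (blockRevPerm n k) id).submatrix id Fin.revPerm := by
    ext r c
    have := Nat.mod_lt r (Nat.pos_of_mul_pos_right r.pos)
    simp only [D, submatrix_apply, transpose_apply, of_apply, id, Fin.revPerm_apply,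
      blockRevPerm_div, blockRevPerm_mod, Fin.val_rev]
    congr 1
    omega
  have hsign : ((Perm.sign (Fin.revPerm : Perm (Fin (n * k))) * Perm.sign (blockRevPerm n k) :
      ℤˣ) : R) = (-1) ^ (n ^ 2 * k.choose 2) := by
    rw [Fin.sign_revPerm, sign_blockRevPerm, Nat.choose_two_mul, pow_add, mul_right_comm,
      ← pow_two, Int.units_sq, one_mul]
    push_cast
    rfl
  rw [hperm, det_permute', det_permute, det_transpose, ← mul_assoc, ← hsign]
  push_cast
  rfl

theorem Delta_self_eq_det (L n : ℕ) (a : ℕ → ℤ → ℂ) :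
    Delta L n a L = det (of fun r c : Fin (n * (L - 1)) =>
      a ((c : ℕ) / n + 1) ((n : ℤ) + ((r : ℕ) : ℤ) - (((c : ℕ) % n : ℕ) : ℤ))) := by
  unfold Delta
  congr 1
  ext r c
  have hblock : (c : ℕ) / n < L - 1 := Nat.div_lt_of_lt_mul c.isLt
  rw [of_apply, of_apply, if_pos (Nat.lt_sub_iff_add_lt.mp hblock)]

theorem NP0_identity_general (L n : ℕ) (h : ℕ → ℕ → ℂ) :
    (Matrix.det (Matrix.of fun r c : Fin (n * (L - 1) + 1) =>
        if (r : ℕ) = 0 then (if (c : ℕ) = n * (L - 1) then (1 : ℂ) else 0)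
        else hz h (((r : ℕ) - 1) / n + 1)
          (((n * (L - 1) : ℕ) : ℤ) + (((((r : ℕ) - 1) % n : ℕ)) : ℤ) - ((c : ℕ) : ℤ))) =
      (-1 : ℂ) ^ (n * (L - 1)) *
        Matrix.det (Matrix.of fun r c : Fin (n * (L - 1)) =>
          hz h ((r : ℕ) / n + 1)
            (((n * (L - 1) : ℕ) : ℤ) + ((((r : ℕ) % n : ℕ)) : ℤ) - ((c : ℕ) : ℤ)))) ∧
    (Matrix.det (Matrix.of fun r c : Fin (n * (L - 1) + 1) =>
        if (r : ℕ) = 0 then (if (c : ℕ) = n * (L - 1) then (1 : ℂ) else 0)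
        else hz h (((r : ℕ) - 1) / n + 1)
          (((n * (L - 1) : ℕ) : ℤ) + (((((r : ℕ) - 1) % n : ℕ)) : ℤ) - ((c : ℕ) : ℤ))) =
      (-1 : ℂ) ^ ((n * (L - 1)) * (n * (L - 1) - n) / 2 + n * (L - 1)) *
        Delta L n (hz h) L) := by
  have hexpand := det_of_row_zero_eq_single_last (m := n * (L - 1)) fun i c =>
    hz h (i / n + 1) (((n * (L - 1) : ℕ) : ℤ) + ((i % n : ℕ) : ℤ) - ((c : ℕ) : ℤ))
  simp only [Fin.val_castSucc] at hexpand
  refine ⟨hexpand, ?_⟩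
  rw [hexpand, det_rowBlocks_eq_det_colBlocks, Delta_self_eq_det, Nat.mul_mul_sub_div_two, pow_add]
  ring

/-- Evaluation of the normalizing constant `NP^{(0)}` as a block-Toeplitz determinant. -/
theorem NP0_identity (L n : ℕ) (hL : 2 ≤ L) (hn : 0 < n) (h : ℕ → ℕ → ℂ) :
    (Matrix.det (Matrix.of fun r c : Fin (n * (L - 1) + 1) =>
        if (r : ℕ) = 0 then (if (c : ℕ) = n * (L - 1) then (1 : ℂ) else 0)
        else hz h (((r : ℕ) - 1) / n + 1)
          (((n * (L - 1) : ℕ) : ℤ) + (((((r : ℕ) - 1) % n : ℕ)) : ℤ) - ((c : ℕ) : ℤ))) =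
      (-1 : ℂ) ^ (n * (L - 1)) *
        Matrix.det (Matrix.of fun r c : Fin (n * (L - 1)) =>
          hz h ((r : ℕ) / n + 1)
            (((n * (L - 1) : ℕ) : ℤ) + ((((r : ℕ) % n : ℕ)) : ℤ) - ((c : ℕ) : ℤ)))) ∧
    (Matrix.det (Matrix.of fun r c : Fin (n * (L - 1) + 1) =>
        if (r : ℕ) = 0 then (if (c : ℕ) = n * (L - 1) then (1 : ℂ) else 0)
        else hz h (((r : ℕ) - 1) / n + 1)
          (((n * (L - 1) : ℕ) : ℤ) + (((((r : ℕ) - 1) % n : ℕ)) : ℤ) - ((c : ℕ) : ℤ))) =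
      (-1 : ℂ) ^ ((n * (L - 1)) * (n * (L - 1) - n) / 2 + n * (L - 1)) *
        Delta L n (hz h) L) :=
  NP0_identity_general L n h
end
end
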